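/- arXiv:1304.2450 — 13 statements merged into one kernel-verified Lean document; each statement's English description precedes it below -/
import Mathlib

section
/- Let (k_n)_{n∈ℕ} be a sequence in H. Then (k_n) is a frame for the Krein space (H,[·,·]) (i.e. there exist 0 < A ≤ B with A‖x‖² ≤ Σ_n |[k_n,x]|² ≤ B‖x‖² for all x ∈ H) if and only if there exists a bounded surjective linear operator T : ℓ²(ℕ,ℂ) → H such that for every α ∈ ℓ²(ℕ,ℂ) the series Σ_n α_n k_n converges in H to T α (equivalently, T maps the n-th standard basis vector e_n to k_n). -/
open scoped InnerProductSpace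

noncomputable section

/-- `(k n)` is a frame for the Hilbert space `H` with bounds `A ≤ B`:
`A‖x‖² ≤ Σ_n |⟨k n, x⟩|² ≤ B‖x‖²` for all `x ∈ H`. -/
def IsHilbertFrame {H : Type*} [NormedAddCommGroup H] [InnerProductSpace ℂ H]
    (k : ℕ → H) (A B : ℝ) : Prop :=
  ∀ x : H, Summable (fun n => ‖⟪k n, x⟫_ℂ‖ ^ 2) ∧
    A * ‖x‖ ^ 2 ≤ ∑' n, ‖⟪k n, x⟫_ℂ‖ ^ 2 ∧ ∑' n, ‖⟪k n, x⟫_ℂ‖ ^ 2 ≤ B * ‖x‖ ^ 2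

/-- `(k n)` is a frame for the Krein space `(H, [x,y] := ⟨x, J y⟩)` with bounds `A ≤ B`:
`A‖x‖² ≤ Σ_n |[k n, x]|² ≤ B‖x‖²` for all `x ∈ H`. -/
def IsKreinFrame {H : Type*} [NormedAddCommGroup H] [InnerProductSpace ℂ H]
    (J : H →L[ℂ] H) (k : ℕ → H) (A B : ℝ) : Prop :=
  ∀ x : H, Summable (fun n => ‖⟪k n, J x⟫_ℂ‖ ^ 2) ∧
    A * ‖x‖ ^ 2 ≤ ∑' n, ‖⟪k n, J x⟫_ℂ‖ ^ 2 ∧ ∑' n, ‖⟪k n, J x⟫_ℂ‖ ^ 2 ≤ B * ‖x‖ ^ 2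

section KreinFrameHelpers
variable {H : Type*} [NormedAddCommGroup H] [InnerProductSpace ℂ H]

lemma KF.rpow_fun_eq (f : ℕ → ℂ) :
    (fun n => ‖f n‖ ^ (2 : ENNReal).toReal) = fun n => ‖f n‖ ^ 2 := by
  funext n
  rw [show (2 : ENNReal).toReal = ((2 : ℕ) : ℝ) by simp, Real.rpow_natCast]

lemma KF.lp2_hasSum (f : lp (fun _ : ℕ => ℂ) 2) :
    HasSum (fun n => ‖f n‖ ^ 2) (‖f‖ ^ 2) := by
  have h := lp.hasSum_norm (p := 2) (E := fun _ : ℕ => ℂ) (by norm_num) f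
  rw [KF.rpow_fun_eq] at h
  rwa [show ‖f‖ ^ (2 : ENNReal).toReal = ‖f‖ ^ 2 by
    rw [show (2 : ENNReal).toReal = ((2 : ℕ) : ℝ) by simp, Real.rpow_natCast]] at h

lemma KF.memℓp_two_of (f : ℕ → ℂ) (h : Summable fun n => ‖f n‖ ^ 2) : Memℓp f 2 := by
  apply memℓp_gen
  rwa [KF.rpow_fun_eq]

lemma KF.finset_synthesis_bound (k : ℕ → H) (B : ℝ) (hB0 : 0 ≤ B)
    (hk : ∀ y : H, Summable (fun n => ‖⟪k n, y⟫_ℂ‖ ^ 2) ∧ ∑' n, ‖⟪k n, y⟫_ℂ‖ ^ 2 ≤ B * ‖y‖ ^ 2)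
    (α : ℕ → ℂ) (t : Finset ℕ) :
    ‖∑ n ∈ t, α n • k n‖ ^ 2 ≤ B * ∑ n ∈ t, ‖α n‖ ^ 2 := by
  set v := ∑ n ∈ t, α n • k n with hv
  have hαnn : (0:ℝ) ≤ ∑ n ∈ t, ‖α n‖ ^ 2 := Finset.sum_nonneg fun n _ => by positivity
  have h1 : ‖v‖ ^ 2 = RCLike.re ⟪v, v⟫_ℂ := (inner_self_eq_norm_sq v).symm
  have h2 : ⟪v, v⟫_ℂ = ∑ n ∈ t, (starRingEnd ℂ) (α n) * ⟪k n, v⟫_ℂ := by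
    rw [hv, sum_inner]
    exact Finset.sum_congr rfl fun n _ => inner_smul_left _ _ _
  have h3 : RCLike.re ⟪v, v⟫_ℂ ≤ ∑ n ∈ t, ‖α n‖ * ‖⟪k n, v⟫_ℂ‖ := by
    calc RCLike.re ⟪v, v⟫_ℂ ≤ ‖⟪v, v⟫_ℂ‖ := RCLike.re_le_norm _
    _ = ‖∑ n ∈ t, (starRingEnd ℂ) (α n) * ⟪k n, v⟫_ℂ‖ := by rw [h2]
    _ ≤ ∑ n ∈ t, ‖(starRingEnd ℂ) (α n) * ⟪k n, v⟫_ℂ‖ := norm_sum_le _ _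
    _ = ∑ n ∈ t, ‖α n‖ * ‖⟪k n, v⟫_ℂ‖ :=
        Finset.sum_congr rfl fun n _ => by rw [norm_mul, RCLike.norm_conj]
  have h4 : ∑ n ∈ t, ‖α n‖ * ‖⟪k n, v⟫_ℂ‖ ≤
      Real.sqrt (∑ n ∈ t, ‖α n‖ ^ 2) * Real.sqrt (∑ n ∈ t, ‖⟪k n, v⟫_ℂ‖ ^ 2) :=
    Real.sum_mul_le_sqrt_mul_sqrt _ _ _
  have h5 : ∑ n ∈ t, ‖⟪k n, v⟫_ℂ‖ ^ 2 ≤ B * ‖v‖ ^ 2 :=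
    le_trans (sum_le_hasSum t (fun n _ => by positivity) (hk v).1.hasSum) (hk v).2
  have h6 : Real.sqrt (∑ n ∈ t, ‖⟪k n, v⟫_ℂ‖ ^ 2) ≤ Real.sqrt B * ‖v‖ := by
    rw [show Real.sqrt B * ‖v‖ = Real.sqrt (B * ‖v‖ ^ 2) by
      rw [Real.sqrt_mul hB0, Real.sqrt_sq (norm_nonneg v)]]
    exact Real.sqrt_le_sqrt h5
  have key : ‖v‖ ^ 2 ≤ Real.sqrt (∑ n ∈ t, ‖α n‖ ^ 2) * (Real.sqrt B * ‖v‖) := by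
    rw [h1]
    refine h3.trans (h4.trans ?_)
    exact mul_le_mul_of_nonneg_left h6 (Real.sqrt_nonneg _)
  rcases eq_or_lt_of_le (norm_nonneg v) with hz | hz
  · rw [← hz]; simpa using mul_nonneg hB0 hαnn
  · have hv2 : ‖v‖ ≤ Real.sqrt (∑ n ∈ t, ‖α n‖ ^ 2) * Real.sqrt B := by
      nlinarith [hz, key]
    calc ‖v‖ ^ 2 ≤ (Real.sqrt (∑ n ∈ t, ‖α n‖ ^ 2) * Real.sqrt B) ^ 2 := by
          nlinarith [hz.le, hv2, Real.sqrt_nonneg (∑ n ∈ t, ‖α n‖ ^ 2), Real.sqrt_nonneg B]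
      _ = B * ∑ n ∈ t, ‖α n‖ ^ 2 := by
          rw [mul_pow, Real.sq_sqrt hαnn, Real.sq_sqrt hB0]; ring

/-- The analysis operator of a Bessel sequence. -/
def KF.analysisOp (k : ℕ → H) (B : ℝ) (hB0 : 0 ≤ B)
    (hk : ∀ y : H, Summable (fun n => ‖⟪k n, y⟫_ℂ‖ ^ 2) ∧ ∑' n, ‖⟪k n, y⟫_ℂ‖ ^ 2 ≤ B * ‖y‖ ^ 2) :
    H →L[ℂ] lp (fun _ : ℕ => ℂ) 2 :=
  LinearMap.mkContinuous
    { toFun := fun y => (⟨fun n => ⟪k n, y⟫_ℂ, KF.memℓp_two_of _ (hk y).1⟩ : lp (fun _ : ℕ => ℂ) 2)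
      map_add' := fun y z => by
        apply Subtype.ext
        funext n
        simp [inner_add_right, lp.coeFn_add]
        rfl
      map_smul' := fun c y => by
        apply Subtype.ext
        funext n
        simp [inner_smul_right, lp.coeFn_smul] }
    (Real.sqrt B)
    (by
      intro y
      set f : lp (fun _ : ℕ => ℂ) 2 :=
        (⟨fun n => ⟪k n, y⟫_ℂ, KF.memℓp_two_of _ (hk y).1⟩ : lp (fun _ : ℕ => ℂ) 2) with hf
      show ‖f‖ ≤ Real.sqrt B * ‖y‖
      have h1 : ‖f‖ ^ 2 = ∑' n, ‖⟪k n, y⟫_ℂ‖ ^ 2 := (KF.lp2_hasSum f).tsum_eq.symm ▸ rfl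
      have h2 : ‖f‖ ^ 2 ≤ B * ‖y‖ ^ 2 := by rw [h1]; exact (hk y).2
      calc ‖f‖ = Real.sqrt (‖f‖ ^ 2) := (Real.sqrt_sq (norm_nonneg f)).symm
        _ ≤ Real.sqrt (B * ‖y‖ ^ 2) := Real.sqrt_le_sqrt h2
        _ = Real.sqrt B * ‖y‖ := by rw [Real.sqrt_mul hB0, Real.sqrt_sq (norm_nonneg y)])

lemma KF.analysisOp_apply (k : ℕ → H) (B : ℝ) (hB0 : 0 ≤ B) (hk) (y : H) (n : ℕ) :
    (KF.analysisOp k B hB0 hk y) n = ⟪k n, y⟫_ℂ := rfl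

lemma KF.cancel {a n s : ℝ} (ha : 0 < a) (hn : 0 < n) (h : a * n ^ 2 ≤ n * s) :
    n ≤ a⁻¹ * s := by
  rw [inv_mul_eq_div, le_div_iff₀ ha]
  nlinarith

end KreinFrameHelpers

set_option maxHeartbeats 2000000 in
theorem krein_frame_iff_preframe_operator {H : Type*} [NormedAddCommGroup H] [InnerProductSpace ℂ H] [CompleteSpace H]
    (J : H →L[ℂ] H) (hJsa : ∀ x y : H, ⟪J x, y⟫_ℂ = ⟪x, J y⟫_ℂ)
    (hJ2 : ∀ x : H, J (J x) = x)
    (k : ℕ → H) :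
    (∃ A B : ℝ, 0 < A ∧ A ≤ B ∧ IsKreinFrame J k A B) ↔
      ∃ T : (lp (fun _ : ℕ => ℂ) 2) →L[ℂ] H, Function.Surjective T ∧
        ∀ α : lp (fun _ : ℕ => ℂ) 2, HasSum (fun n => α n • k n) (T α) := by
  constructor
  · rintro ⟨A, B, hA, hAB, hF⟩
    have hB0 : 0 ≤ B := le_trans hA.le hAB
    set c : ℝ := max ‖J‖ 1 with hc
    have hc1 : (1:ℝ) ≤ c := le_max_right _ _
    have hc0 : (0:ℝ) < c := lt_of_lt_of_le one_pos hc1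
    have hJc : ‖J‖ ≤ c := le_max_left _ _
    have hxc : ∀ x : H, ‖x‖ ≤ c * ‖J x‖ := by
      intro x
      calc ‖x‖ = ‖J (J x)‖ := by rw [hJ2]
        _ ≤ ‖J‖ * ‖J x‖ := J.le_opNorm _
        _ ≤ c * ‖J x‖ := mul_le_mul_of_nonneg_right hJc (norm_nonneg _)
    have hJxc : ∀ x : H, ‖J x‖ ≤ c * ‖x‖ := fun x =>
      (J.le_opNorm x).trans (mul_le_mul_of_nonneg_right hJc (norm_nonneg _))
    have hKey : ∀ y : H, Summable (fun n => ‖⟪k n, y⟫_ℂ‖ ^ 2) ∧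
        A / c ^ 2 * ‖y‖ ^ 2 ≤ ∑' n, ‖⟪k n, y⟫_ℂ‖ ^ 2 ∧
        ∑' n, ‖⟪k n, y⟫_ℂ‖ ^ 2 ≤ (B * c ^ 2) * ‖y‖ ^ 2 := by
      intro y
      have h := hF (J y)
      have he : (fun n => ‖⟪k n, J (J y)⟫_ℂ‖ ^ 2) = fun n => ‖⟪k n, y⟫_ℂ‖ ^ 2 := by
        funext n; rw [hJ2]
      rw [he] at h
      obtain ⟨h1, h2, h3⟩ := h
      refine ⟨h1, ?_, ?_⟩
      · refine le_trans ?_ h2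
        have hy := hxc y
        rw [div_mul_eq_mul_div, div_le_iff₀ (by positivity)]
        have hy2 : ‖y‖ ^ 2 ≤ (c * ‖J y‖) ^ 2 := pow_le_pow_left₀ (norm_nonneg y) hy 2
        nlinarith [hA.le, hy2]
      · refine h3.trans ?_
        have hJy2 : ‖J y‖ ^ 2 ≤ (c * ‖y‖) ^ 2 :=
          pow_le_pow_left₀ (norm_nonneg _) (hJxc y) 2
        nlinarith [hB0, hJy2]
    have hB'0 : (0:ℝ) ≤ B * c ^ 2 := by positivity
    set U : H →L[ℂ] lp (fun _ : ℕ => ℂ) 2 :=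
      KF.analysisOp k (B * c ^ 2) hB'0 (fun y => ⟨(hKey y).1, (hKey y).2.2⟩) with hU
    have hUapp : ∀ (y : H) (n : ℕ), (U y) n = ⟪k n, y⟫_ℂ := fun y n => rfl
    have hnormU : ∀ x : H, ‖U x‖ ^ 2 = ∑' n, ‖⟪k n, x⟫_ℂ‖ ^ 2 := fun x =>
      ((KF.lp2_hasSum (U x)).tsum_eq).symm
    set T : (lp (fun _ : ℕ => ℂ) 2) →L[ℂ] H := ContinuousLinearMap.adjoint U with hT
    -- summability of the synthesis series
    have hsummable : ∀ α : lp (fun _ : ℕ => ℂ) 2, Summable (fun n => α n • k n) := by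
      intro α
      rw [summable_iff_vanishing_norm]
      intro ε hε
      have hα : Summable (fun n => ‖α n‖ ^ 2) := (KF.lp2_hasSum α).summable
      obtain ⟨s, hs⟩ := summable_iff_vanishing_norm.mp hα (ε ^ 2 / (B * c ^ 2 + 1)) (by positivity)
      refine ⟨s, fun t ht => ?_⟩
      have hb := KF.finset_synthesis_bound k (B * c ^ 2) hB'0
        (fun y => ⟨(hKey y).1, (hKey y).2.2⟩) (fun n => α n) t
      have h2 := hs t ht
      have h3 : ∑ n ∈ t, ‖α n‖ ^ 2 ≤ ‖∑ n ∈ t, ‖α n‖ ^ 2‖ := le_abs_self _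
      have h4 : ‖∑ n ∈ t, α n • k n‖ ^ 2 < ε ^ 2 := by
        have hfrac : (B * c ^ 2) * (ε ^ 2 / (B * c ^ 2 + 1)) < ε ^ 2 := by
          rw [mul_div_assoc', div_lt_iff₀ (by positivity)]
          nlinarith
        calc ‖∑ n ∈ t, α n • k n‖ ^ 2 ≤ (B * c ^ 2) * ∑ n ∈ t, ‖α n‖ ^ 2 := hb
          _ ≤ (B * c ^ 2) * (ε ^ 2 / (B * c ^ 2 + 1)) :=
              mul_le_mul_of_nonneg_left (h3.trans h2.le) hB'0
          _ < ε ^ 2 := hfrac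
      exact lt_of_pow_lt_pow_left₀ 2 hε.le h4
    have hTsum : ∀ α : lp (fun _ : ℕ => ℂ) 2, HasSum (fun n => α n • k n) (T α) := by
      intro α
      obtain ⟨S, hS⟩ := hsummable α
      have hTS : T α = S := by
        refine ext_inner_left ℂ fun v => ?_
        have h1 : HasSum (fun n => ⟪v, α n • k n⟫_ℂ) ⟪v, S⟫_ℂ := hS.mapL (innerSL ℂ v)
        have h2 : HasSum (fun n => ⟪(U v) n, α n⟫_ℂ) ⟪U v, α⟫_ℂ := lp.hasSum_inner (U v) α
        have h3 : ⟪v, T α⟫_ℂ = ⟪U v, α⟫_ℂ := ContinuousLinearMap.adjoint_inner_right U v α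
        have h4 : (fun n => ⟪(U v) n, α n⟫_ℂ) = fun n => ⟪v, α n • k n⟫_ℂ := by
          funext n
          rw [inner_smul_right, show ((U v) n : ℂ) = ⟪k n, v⟫_ℂ from rfl,
            RCLike.inner_apply, ← inner_conj_symm (k n) v, starRingEnd_self_apply]
        rw [h4] at h2
        rw [h3, h2.unique h1]
      rw [hTS]; exact hS
    -- surjectivity via the frame operator
    have hA'' : (0:ℝ) < A / c ^ 2 := by positivity
    set Sop : H →L[ℂ] H := T.comp U with hSop
    have hcoer : ∀ x : H, A / c ^ 2 * ‖x‖ ^ 2 ≤ RCLike.re ⟪x, Sop x⟫_ℂ := by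
      intro x
      have h1 : ⟪x, Sop x⟫_ℂ = ⟪U x, U x⟫_ℂ := ContinuousLinearMap.adjoint_inner_right U x (U x)
      rw [h1, inner_self_eq_norm_sq, hnormU]
      exact (hKey x).2.1
    have hbelow : ∀ x : H, ‖x‖ ≤ (A / c ^ 2)⁻¹ * ‖Sop x‖ := by
      intro x
      rcases eq_or_lt_of_le (norm_nonneg x) with hz | hz
      · rw [← hz]; positivity
      · have h2 : RCLike.re ⟪x, Sop x⟫_ℂ ≤ ‖x‖ * ‖Sop x‖ :=
          (RCLike.re_le_norm _).trans (norm_inner_le_norm _ _)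
        exact KF.cancel hA'' hz ((hcoer x).trans h2)
    have hanti : AntilipschitzWith ((A / c ^ 2)⁻¹).toNNReal Sop := by
      refine Sop.antilipschitz_of_bound fun x => ?_
      rw [Real.coe_toNNReal _ (by positivity)]
      exact hbelow x
    have hclosed : IsClosed (Set.range Sop) :=
      hanti.isClosed_range Sop.uniformContinuous
    set R : Submodule ℂ H := LinearMap.range (Sop : H →ₗ[ℂ] H) with hR
    have hRset : (R : Set H) = Set.range Sop := rfl
    have hRclosed : IsClosed (R : Set H) := by rw [hRset]; exact hclosed
    haveI : CompleteSpace R := hRclosed.completeSpace_coe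
    have hRorth : Rᗮ = ⊥ := by
      rw [Submodule.eq_bot_iff]
      intro y hy
      have h0 : ⟪Sop y, y⟫_ℂ = 0 := hy (Sop y) (LinearMap.mem_range_self _ y)
      have h1 : RCLike.re ⟪y, Sop y⟫_ℂ = 0 := by
        rw [← inner_conj_symm]
        rw [h0]
        simp
      have h2 := hcoer y
      rw [h1] at h2
      have h3 : ‖y‖ ^ 2 ≤ 0 := by
        have h4 : A / c ^ 2 * ‖y‖ ^ 2 ≤ A / c ^ 2 * 0 := by rw [mul_zero]; exact h2
        exact le_of_mul_le_mul_left h4 hA''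
      have h5 : ‖y‖ ^ 2 = 0 := le_antisymm h3 (by positivity)
      have h6 : ‖y‖ = 0 := (pow_eq_zero_iff two_ne_zero).mp h5
      exact norm_eq_zero.mp h6
    have hRtop : R = ⊤ := Submodule.orthogonal_eq_bot_iff.mp hRorth
    refine ⟨T, ?_, hTsum⟩
    intro z
    have hz : z ∈ R := hRtop ▸ Submodule.mem_top
    obtain ⟨x, hx⟩ := hz
    exact ⟨U x, hx⟩
  · rintro ⟨T, hTsurj, hTsum⟩
    have hTe : ∀ n, T (lp.single 2 n (1:ℂ)) = k n := by
      intro n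
      have h := hTsum (lp.single 2 n (1:ℂ))
      have h2 : HasSum (fun m => (lp.single 2 n (1:ℂ) : lp (fun _ : ℕ => ℂ) 2) m • k m) (k n) := by
        have he : (fun m => (lp.single 2 n (1:ℂ) : lp (fun _ : ℕ => ℂ) 2) m • k m) =
            fun m => if m = n then k n else 0 := by
          funext m
          rw [lp.single_apply]
          by_cases hmn : m = n
          · subst hmn; simp
          · simp [hmn]
        rw [he]
        exact hasSum_ite_eq n (k n)
      exact (h.unique h2)
    set T' : H →L[ℂ] lp (fun _ : ℕ => ℂ) 2 := ContinuousLinearMap.adjoint T with hT'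
    have hcoord : ∀ (w : H) (n : ℕ), (T' w) n = ⟪k n, w⟫_ℂ := by
      intro w n
      have h1 : ((T' w) n : ℂ) = ⟪lp.single 2 n (1:ℂ), T' w⟫_ℂ := by
        rw [lp.inner_single_left, RCLike.inner_apply]
        simp
      rw [h1, ContinuousLinearMap.adjoint_inner_right, hTe]
    obtain ⟨C, hC0, hC⟩ := ContinuousLinearMap.exists_preimage_norm_le T hTsurj
    set c : ℝ := max ‖J‖ 1 with hc
    have hc1 : (1:ℝ) ≤ c := le_max_right _ _
    have hc0 : (0:ℝ) < c := lt_of_lt_of_le one_pos hc1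
    have hJc : ‖J‖ ≤ c := le_max_left _ _
    have hxc : ∀ x : H, ‖x‖ ≤ c * ‖J x‖ := by
      intro x
      calc ‖x‖ = ‖J (J x)‖ := by rw [hJ2]
        _ ≤ ‖J‖ * ‖J x‖ := J.le_opNorm _
        _ ≤ c * ‖J x‖ := mul_le_mul_of_nonneg_right hJc (norm_nonneg _)
    set A : ℝ := (1 / (C * c)) ^ 2 with hA
    set B : ℝ := max A ((‖T'‖ * c) ^ 2) with hB
    refine ⟨A, B, by positivity, le_max_left _ _, ?_⟩
    intro x
    set g : lp (fun _ : ℕ => ℂ) 2 := T' (J x) with hg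
    have hge : (fun n => ‖⟪k n, J x⟫_ℂ‖ ^ 2) = fun n => ‖g n‖ ^ 2 := by
      funext n; rw [hg, hcoord]
    have hgsum : HasSum (fun n => ‖⟪k n, J x⟫_ℂ‖ ^ 2) (‖g‖ ^ 2) := by
      rw [hge]; exact KF.lp2_hasSum g
    refine ⟨hgsum.summable, ?_, ?_⟩
    · -- lower bound
      rw [hgsum.tsum_eq]
      -- ‖J x‖ ≤ C * ‖g‖
      have hJx : ‖J x‖ ≤ C * ‖g‖ := by
        obtain ⟨u, hu, hun⟩ := hC (J x)
        have h1 : ‖J x‖ ^ 2 = RCLike.re ⟪u, g⟫_ℂ := by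
          rw [hg, ContinuousLinearMap.adjoint_inner_right, hu, inner_self_eq_norm_sq]
        have h2 : RCLike.re ⟪u, g⟫_ℂ ≤ ‖u‖ * ‖g‖ :=
          (RCLike.re_le_norm _).trans (norm_inner_le_norm _ _)
        rcases eq_or_lt_of_le (norm_nonneg (J x)) with hz | hz
        · rw [← hz]; positivity
        · have h3 : ‖u‖ * ‖g‖ ≤ C * ‖J x‖ * ‖g‖ :=
            mul_le_mul_of_nonneg_right hun (norm_nonneg _)
          nlinarith
      have hx2 : ‖x‖ ≤ (C * c) * ‖g‖ := by
        calc ‖x‖ ≤ c * ‖J x‖ := hxc x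
          _ ≤ c * (C * ‖g‖) := mul_le_mul_of_nonneg_left hJx hc0.le
          _ = (C * c) * ‖g‖ := by ring
      have hCc : (0:ℝ) < C * c := by positivity
      rw [hA]
      rw [div_pow, one_pow, div_mul_eq_mul_div, div_le_iff₀ (by positivity)]
      nlinarith [norm_nonneg x, norm_nonneg g]
    · -- upper bound
      rw [hgsum.tsum_eq]
      have h1 : ‖g‖ ≤ ‖T'‖ * ‖J x‖ := T'.le_opNorm _
      have h2 : ‖J x‖ ≤ c * ‖x‖ := (J.le_opNorm x).trans
        (mul_le_mul_of_nonneg_right hJc (norm_nonneg _))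
      have h3 : ‖g‖ ≤ (‖T'‖ * c) * ‖x‖ := by
        refine h1.trans ?_
        calc ‖T'‖ * ‖J x‖ ≤ ‖T'‖ * (c * ‖x‖) :=
              mul_le_mul_of_nonneg_left h2 (norm_nonneg _)
          _ = (‖T'‖ * c) * ‖x‖ := by ring
      have h4 : ‖g‖ ^ 2 ≤ ((‖T'‖ * c) * ‖x‖) ^ 2 := by
        nlinarith [norm_nonneg g, norm_nonneg x, norm_nonneg (T' : H →L[ℂ] lp (fun _ : ℕ => ℂ) 2), hc0.le]
      refine h4.trans ?_
      have h5 : ((‖T'‖ * c) * ‖x‖) ^ 2 = (‖T'‖ * c) ^ 2 * ‖x‖ ^ 2 := by ring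
      rw [h5, hB]
      exact mul_le_mul_of_nonneg_right (le_max_right _ _) (by positivity)
end
end

section
/- Let (k_n)_{n∈ℕ} be a frame for the Krein space (H,[·,·]) with bounds 0 < A ≤ B. Then for every x ∈ H the series Σ_n [k_n, x]·k_n converges in H, the resulting map S : H → H, S x = Σ_n [k_n,x] k_n, is a bounded linear operator, and for all x ∈ H one has A‖x‖² ≤ Re⟨x, S(Jx)⟩ ≤ B‖x‖² (i.e. the operator S∘J is a positive operator bounded below by A and above by B). -/
open scoped InnerProductSpace

noncomputable section

section Aux

variable {H : Type*} [NormedAddCommGroup H] [InnerProductSpace ℂ H] [CompleteSpace H]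

/-- Synthesis bound for finite sums: if `(k n)` is a Bessel sequence with bound `B`, then
`‖∑_{n∈t} c n • k n‖² ≤ B * ∑_{n∈t} ‖c n‖²`. -/
lemma synth_finset_bound (k : ℕ → H) (B : ℝ) (hB : 0 ≤ B)
    (hBessel : ∀ y : H, Summable (fun n => ‖⟪k n, y⟫_ℂ‖ ^ 2) ∧
      ∑' n, ‖⟪k n, y⟫_ℂ‖ ^ 2 ≤ B * ‖y‖ ^ 2)
    (c : ℕ → ℂ) (t : Finset ℕ) :
    ‖∑ n ∈ t, c n • k n‖ ^ 2 ≤ B * ∑ n ∈ t, ‖c n‖ ^ 2 := by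
  set v := ∑ n ∈ t, c n • k n with hv
  have hsum_sq_nonneg : (0:ℝ) ≤ ∑ n ∈ t, ‖c n‖ ^ 2 :=
    Finset.sum_nonneg fun _ _ => sq_nonneg _
  have h1 : ‖v‖ ^ 2 = (⟪v, v⟫_ℂ).re := (inner_self_eq_norm_sq (𝕜 := ℂ) v).symm
  have h2 : ⟪v, v⟫_ℂ = ∑ n ∈ t, (starRingEnd ℂ) (c n) * ⟪k n, v⟫_ℂ := by
    rw [hv, sum_inner]
    exact Finset.sum_congr rfl fun n _ => inner_smul_left _ _ _
  have h3 : ‖v‖ ^ 2 ≤ ∑ n ∈ t, ‖c n‖ * ‖⟪k n, v⟫_ℂ‖ := by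
    rw [h1, h2]
    calc (∑ n ∈ t, (starRingEnd ℂ) (c n) * ⟪k n, v⟫_ℂ).re
        ≤ ‖∑ n ∈ t, (starRingEnd ℂ) (c n) * ⟪k n, v⟫_ℂ‖ := Complex.re_le_norm _
      _ ≤ ∑ n ∈ t, ‖(starRingEnd ℂ) (c n) * ⟪k n, v⟫_ℂ‖ := norm_sum_le _ _
      _ = ∑ n ∈ t, ‖c n‖ * ‖⟪k n, v⟫_ℂ‖ := by simp [norm_mul]
  have hCS : (∑ n ∈ t, ‖c n‖ * ‖⟪k n, v⟫_ℂ‖) ^ 2 ≤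
      (∑ n ∈ t, ‖c n‖ ^ 2) * ∑ n ∈ t, ‖⟪k n, v⟫_ℂ‖ ^ 2 :=
    Finset.sum_mul_sq_le_sq_mul_sq t _ _
  have hBes : ∑ n ∈ t, ‖⟪k n, v⟫_ℂ‖ ^ 2 ≤ B * ‖v‖ ^ 2 :=
    le_trans (Summable.sum_le_tsum t (fun n _ => sq_nonneg _) (hBessel v).1) (hBessel v).2
  have key : (‖v‖ ^ 2) ^ 2 ≤ (∑ n ∈ t, ‖c n‖ ^ 2) * (B * ‖v‖ ^ 2) := by
    calc (‖v‖ ^ 2) ^ 2 ≤ (∑ n ∈ t, ‖c n‖ * ‖⟪k n, v⟫_ℂ‖) ^ 2 :=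
          pow_le_pow_left₀ (sq_nonneg _) h3 2
      _ ≤ (∑ n ∈ t, ‖c n‖ ^ 2) * ∑ n ∈ t, ‖⟪k n, v⟫_ℂ‖ ^ 2 := hCS
      _ ≤ (∑ n ∈ t, ‖c n‖ ^ 2) * (B * ‖v‖ ^ 2) :=
          mul_le_mul_of_nonneg_left hBes hsum_sq_nonneg
  rcases eq_or_ne (‖v‖) 0 with h0 | h0
  · rw [h0]
    simpa using mul_nonneg hB hsum_sq_nonneg
  · have hpos : 0 < ‖v‖ ^ 2 := by positivity
    nlinarith [hpos, key]

end Aux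

theorem frame_operator_bounded_and_positive {H : Type*} [NormedAddCommGroup H] [InnerProductSpace ℂ H] [CompleteSpace H]
    (J : H →L[ℂ] H) (hJsa : ∀ x y : H, ⟪J x, y⟫_ℂ = ⟪x, J y⟫_ℂ)
    (hJ2 : ∀ x : H, J (J x) = x)
    (k : ℕ → H) (A B : ℝ) (hA : 0 < A) (hAB : A ≤ B)
    (hk : IsKreinFrame J k A B) :
    ∃ S : H →L[ℂ] H, (∀ x : H, HasSum (fun n => ⟪k n, J x⟫_ℂ • k n) (S x)) ∧
      ∀ x : H, A * ‖x‖ ^ 2 ≤ (⟪x, S (J x)⟫_ℂ).re ∧ (⟪x, S (J x)⟫_ℂ).re ≤ B * ‖x‖ ^ 2 := by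
  have hB : 0 < B := lt_of_lt_of_le hA hAB
  -- `J` is an isometry
  have hnormJ : ∀ x : H, ‖J x‖ = ‖x‖ := by
    intro x
    have hsq : ‖J x‖ ^ 2 = ‖x‖ ^ 2 := by
      rw [← inner_self_eq_norm_sq (𝕜 := ℂ) (J x), ← inner_self_eq_norm_sq (𝕜 := ℂ) x,
        hJsa, hJ2]
    nlinarith [norm_nonneg (J x), norm_nonneg x]
  -- `(k n)` is a Bessel sequence with bound `B`
  have hBessel : ∀ y : H, Summable (fun n => ‖⟪k n, y⟫_ℂ‖ ^ 2) ∧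
      ∑' n, ‖⟪k n, y⟫_ℂ‖ ^ 2 ≤ B * ‖y‖ ^ 2 := by
    intro y
    have h := hk (J y)
    simp only [hJ2, hnormJ] at h
    exact ⟨h.1, h.2.2⟩
  -- summability of the frame operator series
  have hsummable : ∀ x : H, Summable (fun n => ⟪k n, J x⟫_ℂ • k n) := by
    intro x
    rw [summable_iff_vanishing_norm]
    intro ε hε
    have hc : Summable (fun n => ‖⟪k n, J x⟫_ℂ‖ ^ 2) := (hk x).1
    obtain ⟨s, hs⟩ := summable_iff_vanishing_norm.mp hc (ε ^ 2 / B) (by positivity)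
    refine ⟨s, fun t ht => ?_⟩
    have h1 : ‖∑ n ∈ t, ⟪k n, J x⟫_ℂ • k n‖ ^ 2 ≤ B * ∑ n ∈ t, ‖⟪k n, J x⟫_ℂ‖ ^ 2 :=
      synth_finset_bound k B hB.le hBessel _ t
    have h2 : ∑ n ∈ t, ‖⟪k n, J x⟫_ℂ‖ ^ 2 < ε ^ 2 / B := by
      have := hs t ht
      calc ∑ n ∈ t, ‖⟪k n, J x⟫_ℂ‖ ^ 2 ≤ ‖∑ n ∈ t, ‖⟪k n, J x⟫_ℂ‖ ^ 2‖ :=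
            le_abs_self _
        _ < ε ^ 2 / B := this
    have h3 : ‖∑ n ∈ t, ⟪k n, J x⟫_ℂ • k n‖ ^ 2 < ε ^ 2 := by
      calc ‖∑ n ∈ t, ⟪k n, J x⟫_ℂ • k n‖ ^ 2 ≤ B * ∑ n ∈ t, ‖⟪k n, J x⟫_ℂ‖ ^ 2 := h1
        _ < B * (ε ^ 2 / B) := by exact mul_lt_mul_of_pos_left h2 hB
        _ = ε ^ 2 := by field_simp
    nlinarith [norm_nonneg (∑ n ∈ t, ⟪k n, J x⟫_ℂ • k n), h3, hε]
  have hS : ∀ x : H, HasSum (fun n => ⟪k n, J x⟫_ℂ • k n) (∑' n, ⟪k n, J x⟫_ℂ • k n) :=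
    fun x => (hsummable x).hasSum
  -- the frame operator as a linear map
  set S₀ : H →ₗ[ℂ] H :=
    { toFun := fun x => ∑' n, ⟪k n, J x⟫_ℂ • k n
      map_add' := by
        intro x y
        refine ((hS (x + y)).unique ?_)
        simpa only [map_add, inner_add_right, add_smul] using (hS x).add (hS y)
      map_smul' := by
        intro a x
        refine ((hS (a • x)).unique ?_)
        simpa only [map_smul, inner_smul_right, smul_smul, RingHom.id_apply] using
          (hS x).const_smul a
    } with hS₀def
  -- norm bound for `S₀`
  have hS₀bound : ∀ x : H, ‖S₀ x‖ ≤ B * ‖x‖ := by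
    intro x
    have hpart : ∀ t : Finset ℕ, ‖∑ n ∈ t, ⟪k n, J x⟫_ℂ • k n‖ ≤ B * ‖x‖ := by
      intro t
      have h1 : ‖∑ n ∈ t, ⟪k n, J x⟫_ℂ • k n‖ ^ 2 ≤ B * ∑ n ∈ t, ‖⟪k n, J x⟫_ℂ‖ ^ 2 :=
        synth_finset_bound k B hB.le hBessel _ t
      have h2 : ∑ n ∈ t, ‖⟪k n, J x⟫_ℂ‖ ^ 2 ≤ B * ‖x‖ ^ 2 :=
        le_trans (Summable.sum_le_tsum t (fun n _ => sq_nonneg _) (hk x).1) (hk x).2.2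
      have h3 : ‖∑ n ∈ t, ⟪k n, J x⟫_ℂ • k n‖ ^ 2 ≤ (B * ‖x‖) ^ 2 := by
        calc ‖∑ n ∈ t, ⟪k n, J x⟫_ℂ • k n‖ ^ 2 ≤ B * (B * ‖x‖ ^ 2) :=
              h1.trans (mul_le_mul_of_nonneg_left h2 hB.le)
          _ = (B * ‖x‖) ^ 2 := by ring
      nlinarith [norm_nonneg (∑ n ∈ t, ⟪k n, J x⟫_ℂ • k n), norm_nonneg x, hB.le,
        mul_nonneg hB.le (norm_nonneg x)]
    exact le_of_tendsto' ((hS x).norm) hpart |>.trans le_rfl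
  refine ⟨LinearMap.mkContinuous S₀ B hS₀bound, fun x => hS x, fun x => ?_⟩
  -- positivity bounds
  set S := LinearMap.mkContinuous S₀ B hS₀bound with hSdef
  have hsum : HasSum (fun n => ⟪k n, x⟫_ℂ • k n) (S (J x)) := by
    have h2 : S (J x) = ∑' n, ⟪k n, J (J x)⟫_ℂ • k n := by
      rw [hSdef]; rfl
    rw [h2]
    have := hS (J x)
    simp only [hJ2] at this ⊢
    exact this
  have hinner : HasSum (fun n => ⟪x, ⟪k n, x⟫_ℂ • k n⟫_ℂ) ⟪x, S (J x)⟫_ℂ :=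
    hsum.mapL (innerSL ℂ x)
  have hterm : ∀ n, ⟪x, ⟪k n, x⟫_ℂ • k n⟫_ℂ = ((‖⟪k n, x⟫_ℂ‖ ^ 2 : ℝ) : ℂ) := by
    intro n
    rw [inner_smul_right, ← inner_conj_symm x (k n), Complex.mul_conj]
    norm_cast
    simp [Complex.normSq_eq_norm_sq]
  have hre : HasSum (fun n => ‖⟪k n, x⟫_ℂ‖ ^ 2) (⟪x, S (J x)⟫_ℂ).re := by
    have h' := hinner.mapL Complex.reCLM
    simp only [Complex.reCLM_apply, hterm, Complex.ofReal_re] at h'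
    exact h'
  have htsum : ∑' n, ‖⟪k n, x⟫_ℂ‖ ^ 2 = (⟪x, S (J x)⟫_ℂ).re := hre.tsum_eq
  have h := hk (J x)
  simp only [hJ2, hnormJ] at h
  rw [htsum] at h
  exact ⟨h.2.1, h.2.2⟩
end
end

section
/- Let (k_n)_{n∈ℕ} be a frame for the Krein space (H,[·,·]) with bounds 0 < A ≤ B and let S : H → H be its frame operator, S x = Σ_n [k_n,x] k_n. Then S is bijective and has a bounded inverse S⁻¹ : H → H. -/
open scoped InnerProductSpace

noncomputable section

theorem frame_operator_bijective_boundedInverse {H : Type*} [NormedAddCommGroup H] [InnerProductSpace ℂ H] [CompleteSpace H]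
    (J : H →L[ℂ] H) (hJsa : ∀ x y : H, ⟪J x, y⟫_ℂ = ⟪x, J y⟫_ℂ)
    (hJ2 : ∀ x : H, J (J x) = x)
    (k : ℕ → H) (A B : ℝ) (hA : 0 < A) (hAB : A ≤ B)
    (hk : IsKreinFrame J k A B) (S : H →L[ℂ] H)
    (hS : ∀ x : H, HasSum (fun n => ⟪k n, J x⟫_ℂ • k n) (S x)) :
    Function.Bijective S ∧
      ∃ Sinv : H →L[ℂ] H, (∀ x : H, Sinv (S x) = x) ∧ (∀ x : H, S (Sinv x) = x) := by
  -- J preserves norms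
  have hJn : ∀ x : H, ‖J x‖ = ‖x‖ := by
    intro x
    have h1 : ⟪J x, J x⟫_ℂ = ⟪x, x⟫_ℂ := by rw [hJsa, hJ2]
    have h2 : (‖J x‖ : ℝ) ^ 2 = ‖x‖ ^ 2 := by
      rw [← @inner_self_eq_norm_sq ℂ, ← @inner_self_eq_norm_sq ℂ, h1]
    rw [← Real.sqrt_sq (norm_nonneg (J x)), ← Real.sqrt_sq (norm_nonneg x), h2]
  -- the Hilbert frame operator T = S ∘ J
  set T : H →L[ℂ] H := S.comp J with hTdef
  have hT : ∀ x : H, HasSum (fun n => ⟪k n, x⟫_ℂ • k n) (T x) := by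
    intro x
    have := hS (J x)
    simpa [hJ2, hTdef] using this
  -- the quadratic form of T
  have hre : ∀ x : H, HasSum (fun n => ‖⟪k n, x⟫_ℂ‖ ^ 2) ((⟪x, T x⟫_ℂ).re) := by
    intro x
    have h1 : HasSum (fun n => ⟪x, ⟪k n, x⟫_ℂ • k n⟫_ℂ) ⟪x, T x⟫_ℂ :=
      (innerSL ℂ x).hasSum (hT x)
    have h2 : (fun n => ⟪x, ⟪k n, x⟫_ℂ • k n⟫_ℂ) =
        fun n => ((‖⟪k n, x⟫_ℂ‖ ^ 2 : ℝ) : ℂ) := by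
      funext n
      rw [inner_smul_right, ← inner_conj_symm x (k n), Complex.mul_conj']
      norm_cast
    rw [h2] at h1
    have h3 := Complex.reCLM.hasSum h1
    simpa only [Complex.reCLM_apply, Complex.ofReal_re] using h3
  -- coercivity
  have hcoer : ∀ x : H, A * ‖x‖ ^ 2 ≤ (⟪x, T x⟫_ℂ).re := by
    intro x
    have h := (hk (J x)).2.1
    simp only [hJ2, hJn] at h
    rw [(hre x).tsum_eq] at h
    exact h
  -- lower bound on ‖T x‖
  have hlow : ∀ x : H, A * ‖x‖ ≤ ‖T x‖ := by
    intro x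
    rcases eq_or_ne x 0 with rfl | hx
    · simp
    · have h1 : A * ‖x‖ ^ 2 ≤ ‖x‖ * ‖T x‖ := by
        calc A * ‖x‖ ^ 2 ≤ (⟪x, T x⟫_ℂ).re := hcoer x
        _ ≤ ‖⟪x, T x⟫_ℂ‖ := Complex.re_le_norm _
        _ ≤ ‖x‖ * ‖T x‖ := norm_inner_le_norm x (T x)
      have hxpos : 0 < ‖x‖ := norm_pos_iff.mpr hx
      nlinarith
  have hanti : AntilipschitzWith (Real.toNNReal A)⁻¹ T := by
    apply ContinuousLinearMap.antilipschitz_of_bound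
    intro x
    have := hlow x
    rw [NNReal.coe_inv, Real.coe_toNNReal _ hA.le]
    rw [inv_mul_eq_div, le_div_iff₀ hA]
    linarith
  have hinj : Function.Injective T := hanti.injective
  have hker : LinearMap.ker (T : H →ₗ[ℂ] H) = ⊥ := LinearMap.ker_eq_bot.mpr hinj
  have hclosed : IsClosed (Set.range T) := hanti.isClosed_range T.uniformContinuous
  have horth : (LinearMap.range (T : H →ₗ[ℂ] H))ᗮ = ⊥ := by
    rw [Submodule.eq_bot_iff]
    intro y hy
    have h0 : ⟪T y, y⟫_ℂ = 0 :=
      (Submodule.mem_orthogonal _ _).mp hy (T y) (LinearMap.mem_range_self _ y)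
    have h1 : ⟪y, T y⟫_ℂ = 0 := by
      rw [← inner_conj_symm, h0, map_zero]
    have h2 := hcoer y
    rw [h1] at h2
    simp only [Complex.zero_re] at h2
    have : ‖y‖ = 0 := by
      by_contra hne
      have hpos : 0 < ‖y‖ := lt_of_le_of_ne (norm_nonneg y) (Ne.symm hne)
      nlinarith [mul_pos hA (pow_pos hpos 2)]
    exact norm_eq_zero.mp this
  have hrange : LinearMap.range (T : H →ₗ[ℂ] H) = ⊤ := by
    have hcl : (LinearMap.range (T : H →ₗ[ℂ] H)).topologicalClosure = LinearMap.range (T : H →ₗ[ℂ] H) :=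
      SetLike.coe_injective (by
        simpa [LinearMap.coe_range, ContinuousLinearMap.coe_coe] using hclosed.closure_eq)
    have h := Submodule.orthogonal_orthogonal_eq_closure (LinearMap.range (T : H →ₗ[ℂ] H))
    rw [horth, Submodule.bot_orthogonal_eq_top] at h
    rw [← hcl, ← h]
  -- the inverse
  let e : H ≃L[ℂ] H := ContinuousLinearEquiv.ofBijective T hker hrange
  have he : ∀ x : H, e x = T x := fun _ => rfl
  have hSx : ∀ x : H, S x = T (J x) := by
    intro x
    conv_lhs => rw [← hJ2 x]
    rfl
  have hJbij : Function.Bijective J := Function.Involutive.bijective hJ2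
  have hTbij : Function.Bijective T := ⟨hinj, fun y => ⟨e.symm y, by
    rw [← he, e.apply_symm_apply]⟩⟩
  constructor
  · have : Function.Bijective (fun x => T (J x)) := hTbij.comp hJbij
    have heq : (fun x => T (J x)) = fun x => S x := by
      funext x; rw [hSx]
    rw [heq] at this
    exact this
  · refine ⟨J.comp (e.symm : H →L[ℂ] H), ?_, ?_⟩
    · intro x
      simp only [ContinuousLinearMap.coe_comp', Function.comp_apply,
        ContinuousLinearEquiv.coe_coe]
      rw [hSx, ← he, e.symm_apply_apply, hJ2]
    · intro x
      simp only [ContinuousLinearMap.coe_comp', Function.comp_apply,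
        ContinuousLinearEquiv.coe_coe]
      rw [hSx, hJ2, ← he, e.apply_symm_apply]
end
end

section
/- Let (k_n)_{n∈ℕ} be a frame for the Krein space (H,[·,·]) with bounds 0 < A ≤ B, let S : H → H be its frame operator, S x = Σ_n [k_n,x] k_n, which is invertible with bounded inverse S⁻¹. Then for all k ∈ H one has B⁻¹‖k‖² ≤ Re⟨k, J(S⁻¹ k)⟩ ≤ A⁻¹‖k‖² (i.e. J∘S⁻¹ is a positive operator with B⁻¹ ≤ J S⁻¹ ≤ A⁻¹). -/
open scoped InnerProductSpace
open scoped ENNReal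

noncomputable section

lemma lp_norm_sq (a : ℕ → ℂ) (ha : Summable fun n => ‖a n‖ ^ 2)
    (f : lp (fun _ : ℕ => ℂ) 2) (hf : ∀ n, f n = a n) :
    ⟪f, f⟫_ℂ = ((∑' n, ‖a n‖ ^ 2 : ℝ) : ℂ) := by
  rw [lp.inner_eq_tsum]
  rw [Complex.ofReal_tsum]
  congr 1; ext n
  simp [hf n, RCLike.inner_apply, RCLike.conj_mul]

/-- Cauchy–Schwarz for ℓ² sequences of complex numbers. -/
lemma cs_tsum (a b : ℕ → ℂ) (ha : Summable fun n => ‖a n‖ ^ 2)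
    (hb : Summable fun n => ‖b n‖ ^ 2) :
    ‖∑' n, (starRingEnd ℂ) (a n) * b n‖ ^ 2 ≤ (∑' n, ‖a n‖ ^ 2) * (∑' n, ‖b n‖ ^ 2) := by
  have h2 : (2 : ℝ≥0∞).toReal = 2 := by simp
  have hfa : Memℓp a 2 := memℓp_gen (by simpa [h2] using ha)
  have hfb : Memℓp b 2 := memℓp_gen (by simpa [h2] using hb)
  set f : lp (fun _ : ℕ => ℂ) 2 := ⟨a, hfa⟩
  set g : lp (fun _ : ℕ => ℂ) 2 := ⟨b, hfb⟩
  have hinner : ⟪f, g⟫_ℂ = ∑' n, (starRingEnd ℂ) (a n) * b n := by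
    rw [lp.inner_eq_tsum]
    congr 1; ext n
    simp only [f, g, RCLike.inner_apply]
    ring
  have hna : ‖f‖ ^ 2 = ∑' n, ‖a n‖ ^ 2 := by
    have := lp_norm_sq a ha f (fun n => rfl)
    rw [inner_self_eq_norm_sq_to_K] at this
    simpa [← Complex.ofReal_pow] using congrArg Complex.re this
  have hnb : ‖g‖ ^ 2 = ∑' n, ‖b n‖ ^ 2 := by
    have := lp_norm_sq b hb g (fun n => rfl)
    rw [inner_self_eq_norm_sq_to_K] at this
    simpa [← Complex.ofReal_pow] using congrArg Complex.re this
  rw [← hinner, ← hna, ← hnb, ← mul_pow]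
  exact pow_le_pow_left₀ (norm_nonneg _) (norm_inner_le_norm f g) 2

theorem inverse_frame_operator_bounds {H : Type*} [NormedAddCommGroup H] [InnerProductSpace ℂ H] [CompleteSpace H]
    (J : H →L[ℂ] H) (hJsa : ∀ x y : H, ⟪J x, y⟫_ℂ = ⟪x, J y⟫_ℂ)
    (hJ2 : ∀ x : H, J (J x) = x)
    (k : ℕ → H) (A B : ℝ) (hA : 0 < A) (hAB : A ≤ B)
    (hk : IsKreinFrame J k A B) (S Sinv : H →L[ℂ] H)
    (hS : ∀ x : H, HasSum (fun n => ⟪k n, J x⟫_ℂ • k n) (S x))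
    (hSinv₁ : ∀ x : H, Sinv (S x) = x) (hSinv₂ : ∀ x : H, S (Sinv x) = x) :
    ∀ x : H, B⁻¹ * ‖x‖ ^ 2 ≤ (⟪x, J (Sinv x)⟫_ℂ).re ∧
      (⟪x, J (Sinv x)⟫_ℂ).re ≤ A⁻¹ * ‖x‖ ^ 2 := by
  have hB : (0:ℝ) < B := lt_of_lt_of_le hA hAB
  -- norm preservation of J
  have hJnorm : ∀ v : H, ‖J v‖ = ‖v‖ := by
    intro v
    have h1 : ⟪J v, J v⟫_ℂ = ⟪v, v⟫_ℂ := by rw [hJsa, hJ2]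
    rw [inner_self_eq_norm_sq_to_K, inner_self_eq_norm_sq_to_K] at h1
    have h2 : ‖J v‖ ^ 2 = ‖v‖ ^ 2 := by exact_mod_cast h1
    nlinarith [norm_nonneg (J v), norm_nonneg v]
  -- inner products against S
  have hinner : ∀ u v : H, HasSum (fun n => ⟪k n, J u⟫_ℂ * ⟪v, k n⟫_ℂ) ⟪v, S u⟫_ℂ := by
    intro u v
    have := (innerSL ℂ v).hasSum (hS u)
    simpa [inner_smul_right] using this
  intro x
  set y := Sinv x with hy
  have hx : S y = x := hSinv₂ x
  set Qy : ℝ := ∑' n, ‖⟪k n, J y⟫_ℂ‖ ^ 2 with hQy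
  have hQy0 : 0 ≤ Qy := tsum_nonneg (fun n => sq_nonneg _)
  -- ⟪J y, S y⟫ = Qy
  have e1 : ⟪J y, S y⟫_ℂ = (Qy : ℂ) := by
    have h1 := hinner y (J y)
    have h2 : HasSum (fun n => ((‖⟪k n, J y⟫_ℂ‖ ^ 2 : ℝ) : ℂ)) ((Qy : ℝ) : ℂ) :=
      Complex.ofRealCLM.hasSum ((hk y).1.hasSum)
    refine h1.unique ?_
    convert h2 using 2 with n
    rw [← inner_conj_symm (J y) (k n), RCLike.mul_conj]
    norm_cast
  have e2 : ⟪x, J y⟫_ℂ = (Qy : ℂ) := by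
    rw [← inner_conj_symm x (J y), ← hx, e1, Complex.conj_ofReal]
  have ere : (⟪x, J y⟫_ℂ).re = Qy := by rw [e2, Complex.ofReal_re]
  obtain ⟨hsumy, hlby, huby⟩ := hk y
  constructor
  · -- lower bound
    rw [ere]
    set a : ℕ → ℂ := fun n => ⟪k n, J y⟫_ℂ with hadef
    set b : ℕ → ℂ := fun n => ⟪k n, x⟫_ℂ with hbdef
    have hbs : Summable fun n => ‖b n‖ ^ 2 := by simpa [hbdef, hJ2] using (hk (J x)).1
    have hbub : ∑' n, ‖b n‖ ^ 2 ≤ B * ‖x‖ ^ 2 := by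
      have := (hk (J x)).2.2
      simpa [hbdef, hJ2, hJnorm] using this
    have hsum : HasSum (fun n => (starRingEnd ℂ) (a n) * b n) ((‖x‖ ^ 2 : ℝ) : ℂ) := by
      have h1 := hinner y x
      rw [hx, inner_self_eq_norm_sq_to_K] at h1
      have h2 : HasSum (fun n => (starRingEnd ℂ) (⟪k n, J y⟫_ℂ * ⟪x, k n⟫_ℂ))
          ((starRingEnd ℂ) ((‖x‖ : ℂ) ^ 2)) :=
        Complex.conjLIE.toContinuousLinearMap.hasSum h1
      convert h2 using 2 with n
      · simp only [hadef, hbdef, map_mul, inner_conj_symm]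
      · push_cast; simp
    have hcs := cs_tsum a b hsumy hbs
    rw [hsum.tsum_eq] at hcs
    have hns : ‖((‖x‖ ^ 2 : ℝ) : ℂ)‖ = ‖x‖ ^ 2 := by
      rw [Complex.norm_real, Real.norm_of_nonneg (sq_nonneg _)]
    rw [hns] at hcs
    have key : (‖x‖ ^ 2) ^ 2 ≤ Qy * (B * ‖x‖ ^ 2) :=
      le_trans hcs (mul_le_mul_of_nonneg_left hbub hQy0)
    rcases eq_or_ne x 0 with rfl | hx0
    · simpa using hQy0
    · have hxpos : (0:ℝ) < ‖x‖ ^ 2 := pow_pos (norm_pos_iff.mpr hx0) 2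
      rw [inv_mul_le_iff₀ hB]
      nlinarith [key, hxpos, hB]
  · -- upper bound
    rw [ere]
    have h1 : Qy ≤ ‖x‖ * ‖y‖ := by
      calc Qy = (⟪x, J y⟫_ℂ).re := ere.symm
        _ ≤ ‖⟪x, J y⟫_ℂ‖ := Complex.re_le_norm _
        _ ≤ ‖x‖ * ‖J y‖ := norm_inner_le_norm x (J y)
        _ = ‖x‖ * ‖y‖ := by rw [hJnorm]
    rcases le_or_gt Qy 0 with hq | hq
    · have : (0:ℝ) ≤ A⁻¹ * ‖x‖ ^ 2 := by positivity
      linarith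
    · rw [le_inv_mul_iff₀ hA]
      nlinarith [sq_nonneg (‖x‖ - A * ‖y‖), hlby, h1, hA, mul_le_mul_of_nonneg_left h1 hA.le,
        mul_le_mul_of_nonneg_left hlby hA.le, norm_nonneg x, norm_nonneg y]
end
end

section
/- (Frame Decomposition, first identity.) Let (k_n)_{n∈ℕ} be a frame for the Krein space (H,[·,·]), let S be its frame operator (S x = Σ_n [k_n,x] k_n), which is invertible with bounded inverse S⁻¹. Then for every k ∈ H the family ([k_n, k]·S⁻¹ k_n)_{n∈ℕ} is unconditionally summable in H with sum k, i.e. k = Σ_n [k_n, k]·S⁻¹ k_n. -/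
open scoped InnerProductSpace

noncomputable section

theorem frame_decomposition_first {H : Type*} [NormedAddCommGroup H] [InnerProductSpace ℂ H] [CompleteSpace H]
    (J : H →L[ℂ] H) (hJsa : ∀ x y : H, ⟪J x, y⟫_ℂ = ⟪x, J y⟫_ℂ)
    (hJ2 : ∀ x : H, J (J x) = x)
    (k : ℕ → H) (A B : ℝ) (hA : 0 < A) (hAB : A ≤ B)
    (hk : IsKreinFrame J k A B) (S Sinv : H →L[ℂ] H)
    (hS : ∀ x : H, HasSum (fun n => ⟪k n, J x⟫_ℂ • k n) (S x))
    (hSinv₁ : ∀ x : H, Sinv (S x) = x) (hSinv₂ : ∀ x : H, S (Sinv x) = x) :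
    ∀ x : H, HasSum (fun n => ⟪k n, J x⟫_ℂ • Sinv (k n)) x := by
  intro x
  have h := (hS x).mapL Sinv
  simpa [hSinv₁ x] using h
end
end

section
/- (Frame Decomposition, second identity.) Let (k_n)_{n∈ℕ} be a frame for the Krein space (H,[·,·]), let S be its frame operator (S x = Σ_n [k_n,x] k_n), which is invertible with bounded inverse S⁻¹. Then for every k ∈ H the family ([S⁻¹ k_n, k]·k_n)_{n∈ℕ} is unconditionally summable in H with sum k, i.e. k = Σ_n [S⁻¹ k_n, k]·k_n. -/
open scoped InnerProductSpace

noncomputable section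

theorem frame_decomposition_second {H : Type*} [NormedAddCommGroup H] [InnerProductSpace ℂ H] [CompleteSpace H]
    (J : H →L[ℂ] H) (hJsa : ∀ x y : H, ⟪J x, y⟫_ℂ = ⟪x, J y⟫_ℂ)
    (hJ2 : ∀ x : H, J (J x) = x)
    (k : ℕ → H) (A B : ℝ) (hA : 0 < A) (hAB : A ≤ B)
    (hk : IsKreinFrame J k A B) (S Sinv : H →L[ℂ] H)
    (hS : ∀ x : H, HasSum (fun n => ⟪k n, J x⟫_ℂ • k n) (S x))
    (hSinv₁ : ∀ x : H, Sinv (S x) = x) (hSinv₂ : ∀ x : H, S (Sinv x) = x) :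
    ∀ x : H, HasSum (fun n => ⟪Sinv (k n), J x⟫_ℂ • k n) x := by
  have hSsa : ∀ y x : H, ⟪S y, J x⟫_ℂ = ⟪y, J (S x)⟫_ℂ := by
    intro y x
    have h1 : HasSum (fun n => ⟪k n, J y⟫_ℂ * ⟪J x, k n⟫_ℂ) ⟪J x, S y⟫_ℂ := by
      have := (hS y).mapL (innerSL ℂ (J x))
      simpa [inner_smul_right] using this
    have h2 : HasSum (fun n => ⟪k n, J x⟫_ℂ * ⟪J y, k n⟫_ℂ) ⟪J y, S x⟫_ℂ := by
      have := (hS x).mapL (innerSL ℂ (J y))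
      simpa [inner_smul_right] using this
    have h2' : HasSum (fun n => ⟪k n, J y⟫_ℂ * ⟪J x, k n⟫_ℂ)
        (starRingEnd ℂ ⟪J y, S x⟫_ℂ) := by
      have := h2.star
      simpa [star_mul', mul_comm, inner_conj_symm, RCLike.star_def] using this
    have key : ⟪J x, S y⟫_ℂ = starRingEnd ℂ ⟪J y, S x⟫_ℂ := h1.unique h2'
    calc ⟪S y, J x⟫_ℂ = starRingEnd ℂ ⟪J x, S y⟫_ℂ := (inner_conj_symm _ _).symm
      _ = ⟪J y, S x⟫_ℂ := by rw [key]; simp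
      _ = ⟪y, J (S x)⟫_ℂ := hJsa y (S x)
  have hSinvsa : ∀ y x : H, ⟪Sinv y, J x⟫_ℂ = ⟪y, J (Sinv x)⟫_ℂ := by
    intro y x
    calc ⟪Sinv y, J x⟫_ℂ = ⟪Sinv y, J (S (Sinv x))⟫_ℂ := by rw [hSinv₂]
      _ = ⟪S (Sinv y), J (Sinv x)⟫_ℂ := (hSsa _ _).symm
      _ = ⟪y, J (Sinv x)⟫_ℂ := by rw [hSinv₂]
  intro x
  have := hS (Sinv x)
  rw [hSinv₂] at this
  convert this using 2 with n
  rw [hSinvsa]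
end
end

section
/- (Canonical dual frame.) Let (k_n)_{n∈ℕ} be a frame for the Krein space (H,[·,·]) with bounds 0 < A ≤ B, and let S be its frame operator (S x = Σ_n [k_n,x] k_n), which is invertible with bounded inverse S⁻¹. Then (S⁻¹ k_n)_{n∈ℕ} is a frame for the Krein space (H,[·,·]) with bounds B⁻¹ ≤ A⁻¹, and it is a dual frame of (k_n): for every k ∈ H, k = Σ_n [S⁻¹ k_n, k]·k_n. -/
open scoped InnerProductSpace

noncomputable section

/-- Cauchy–Schwarz inequality for infinite sums of nonnegative reals. -/
lemma tsum_mul_le_sqrt_mul_sqrt_aux (a b : ℕ → ℝ) (ha : ∀ n, 0 ≤ a n) (hb : ∀ n, 0 ≤ b n)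
    (hsa : Summable (fun n => a n ^ 2)) (hsb : Summable (fun n => b n ^ 2)) :
    ∑' n, a n * b n ≤ Real.sqrt (∑' n, a n ^ 2) * Real.sqrt (∑' n, b n ^ 2) := by
  have hsab : Summable (fun n => a n * b n) := by
    refine Summable.of_nonneg_of_le (fun n => mul_nonneg (ha n) (hb n))
      (fun n => ?_) ((hsa.add hsb).div_const 2)
    have := sq_nonneg (a n - b n)
    nlinarith
  refine Summable.tsum_le_of_sum_le hsab fun s => ?_
  have h1 : (∑ n ∈ s, a n * b n) ^ 2 ≤ (∑ n ∈ s, a n ^ 2) * ∑ n ∈ s, b n ^ 2 :=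
    Finset.sum_mul_sq_le_sq_mul_sq s a b
  have h2 : ∑ n ∈ s, a n ^ 2 ≤ ∑' n, a n ^ 2 := Summable.sum_le_tsum s (fun n _ => sq_nonneg _) hsa
  have h3 : ∑ n ∈ s, b n ^ 2 ≤ ∑' n, b n ^ 2 := Summable.sum_le_tsum s (fun n _ => sq_nonneg _) hsb
  have hs0 : 0 ≤ ∑ n ∈ s, a n * b n :=
    Finset.sum_nonneg fun n _ => mul_nonneg (ha n) (hb n)
  have hTa : (0:ℝ) ≤ ∑' n, a n ^ 2 := tsum_nonneg fun n => sq_nonneg _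
  have hTb : (0:ℝ) ≤ ∑' n, b n ^ 2 := tsum_nonneg fun n => sq_nonneg _
  rw [← Real.sqrt_mul hTa]
  rw [Real.le_sqrt hs0 (mul_nonneg hTa hTb)]
  calc (∑ n ∈ s, a n * b n) ^ 2 ≤ (∑ n ∈ s, a n ^ 2) * ∑ n ∈ s, b n ^ 2 := h1
    _ ≤ (∑' n, a n ^ 2) * ∑' n, b n ^ 2 := by
        apply mul_le_mul h2 h3 (Finset.sum_nonneg fun n _ => sq_nonneg _)
        exact tsum_nonneg fun n => sq_nonneg _

theorem canonical_dual_frame {H : Type*} [NormedAddCommGroup H] [InnerProductSpace ℂ H] [CompleteSpace H]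
    (J : H →L[ℂ] H) (hJsa : ∀ x y : H, ⟪J x, y⟫_ℂ = ⟪x, J y⟫_ℂ)
    (hJ2 : ∀ x : H, J (J x) = x)
    (k : ℕ → H) (A B : ℝ) (hA : 0 < A) (hAB : A ≤ B)
    (hk : IsKreinFrame J k A B) (S Sinv : H →L[ℂ] H)
    (hS : ∀ x : H, HasSum (fun n => ⟪k n, J x⟫_ℂ • k n) (S x))
    (hSinv₁ : ∀ x : H, Sinv (S x) = x) (hSinv₂ : ∀ x : H, S (Sinv x) = x) :
    IsKreinFrame J (fun n => Sinv (k n)) B⁻¹ A⁻¹ ∧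
      ∀ x : H, HasSum (fun n => ⟪Sinv (k n), J x⟫_ℂ • k n) x := by
  have hB : 0 < B := lt_of_lt_of_le hA hAB
  have hJ' : ∀ x y : H, ⟪x, J y⟫_ℂ = ⟪J x, y⟫_ℂ := fun x y => (hJsa x y).symm
  -- J is an isometry
  have hnormJ : ∀ x : H, ‖J x‖ = ‖x‖ := by
    intro x
    have h : ⟪J x, J x⟫_ℂ = ⟪x, x⟫_ℂ := by rw [hJsa, hJ2]
    rw [inner_self_eq_norm_sq_to_K, inner_self_eq_norm_sq_to_K] at h
    have h' : (‖J x‖ : ℝ) ^ 2 = ‖x‖ ^ 2 := by exact_mod_cast h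
    nlinarith [norm_nonneg (J x), norm_nonneg x]
  -- inner products against S x
  have hS_inner : ∀ x z : H,
      HasSum (fun n => ⟪k n, J x⟫_ℂ * ⟪z, k n⟫_ℂ) ⟪z, S x⟫_ℂ := by
    intro x z
    have := (innerSL ℂ z).hasSum (hS x)
    simpa [inner_smul_right] using this
  -- adjoint identity for S
  have hadj : ∀ x y : H, ⟪S x, y⟫_ℂ = ⟪x, J (S (J y))⟫_ℂ := by
    intro x y
    have h1 : HasSum (fun n => ⟪k n, J x⟫_ℂ * ⟪y, k n⟫_ℂ) ⟪y, S x⟫_ℂ := hS_inner x y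
    have h1' : HasSum (fun n => star (⟪k n, J x⟫_ℂ * ⟪y, k n⟫_ℂ)) (star ⟪y, S x⟫_ℂ) :=
      h1.star
    have h2 : HasSum (fun n => ⟪k n, J (J y)⟫_ℂ * ⟪J x, k n⟫_ℂ) ⟪J x, S (J y)⟫_ℂ :=
      hS_inner (J y) (J x)
    have heq : (fun n => star (⟪k n, J x⟫_ℂ * ⟪y, k n⟫_ℂ)) =
        (fun n => ⟪k n, J (J y)⟫_ℂ * ⟪J x, k n⟫_ℂ) := by
      funext n
      simp only [star_mul', hJ2]
      rw [← inner_conj_symm (k n) (J x), ← inner_conj_symm y (k n)]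
      simp only [starRingEnd_apply, star_star]
      ring
    rw [heq] at h1'
    have hst : star ⟪y, S x⟫_ℂ = ⟪J x, S (J y)⟫_ℂ := h1'.unique h2
    have hc : ⟪S x, y⟫_ℂ = star ⟪y, S x⟫_ℂ := by
      rw [← inner_conj_symm (S x) y, starRingEnd_apply]
    rw [hc, hst, hJsa]
  -- adjoint identity for Sinv
  have hadjinv : ∀ x y : H, ⟪Sinv x, y⟫_ℂ = ⟪x, J (Sinv (J y))⟫_ℂ := by
    intro x y
    have h1 : ⟪x, J (Sinv (J y))⟫_ℂ = ⟪S (Sinv x), J (Sinv (J y))⟫_ℂ := by rw [hSinv₂]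
    rw [h1, hadj, hJ2, hSinv₂, hJ2]
  have hkey : ∀ (n : ℕ) (x : H), ⟪Sinv (k n), J x⟫_ℂ = ⟪k n, J (Sinv x)⟫_ℂ := by
    intro n x
    rw [hadjinv, hJ2]
  -- quadratic form identity : ∑ ‖⟪k n, J y⟫‖² = re ⟪J y, S y⟫
  have hQ : ∀ y : H, HasSum (fun n => ‖⟪k n, J y⟫_ℂ‖ ^ 2) (Complex.re ⟪J y, S y⟫_ℂ) := by
    intro y
    have h1 : HasSum (fun n => ⟪k n, J y⟫_ℂ * ⟪J y, k n⟫_ℂ) ⟪J y, S y⟫_ℂ := hS_inner y (J y)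
    have h2 := Complex.reCLM.hasSum h1
    have heq : (fun n => Complex.re (⟪k n, J y⟫_ℂ * ⟪J y, k n⟫_ℂ)) =
        (fun n => ‖⟪k n, J y⟫_ℂ‖ ^ 2) := by
      funext n
      rw [← inner_conj_symm (J y) (k n), Complex.mul_conj]
      simp [Complex.normSq_eq_norm_sq, ← Complex.ofReal_pow]
    simpa only [Complex.reCLM_apply, heq] using h2
  constructor
  · -- frame property for the dual family
    intro x
    set y : H := Sinv x with hy
    have hrw : (fun n => ‖⟪Sinv (k n), J x⟫_ℂ‖ ^ 2) = (fun n => ‖⟪k n, J y⟫_ℂ‖ ^ 2) := by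
      funext n; rw [hkey]
    have hky := hk y
    have hQx : (∑' n, ‖⟪k n, J y⟫_ℂ‖ ^ 2) = Complex.re ⟪J y, x⟫_ℂ := by
      have := (hQ y).tsum_eq
      rw [this, hy, hSinv₂]
    refine ⟨by rw [hrw]; exact hky.1, ?_, ?_⟩
    · -- lower bound B⁻¹‖x‖² ≤ Q
      rw [hrw]
      by_cases hx0 : x = 0
      · simp [hx0]
        exact tsum_nonneg fun n => sq_nonneg _
      -- ‖x‖² = ‖⟪x, S y⟫‖ ≤ ∑ ‖⟪k n,Jy⟫‖ ‖⟪k n, J (J x)⟫‖ ≤ √Q √Q(Jx)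
      have hxx : ⟪x, S y⟫_ℂ = ((‖x‖ : ℂ)) ^ 2 := by
        rw [hy, hSinv₂]; exact inner_self_eq_norm_sq_to_K x
      have hsum : HasSum (fun n => ⟪k n, J y⟫_ℂ * ⟪x, k n⟫_ℂ) ⟪x, S y⟫_ℂ := hS_inner y x
      have hbn : ∀ n, ‖⟪x, k n⟫_ℂ‖ = ‖⟪k n, J (J x)⟫_ℂ‖ := by
        intro n
        rw [hJ2, norm_inner_symm]
      have hnorm_summable : Summable (fun n => ‖⟪k n, J y⟫_ℂ‖ * ‖⟪k n, J (J x)⟫_ℂ‖) := by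
        refine Summable.of_nonneg_of_le (fun n => by positivity) (fun n => ?_)
          (((hk y).1.add (hk (J x)).1).div_const 2)
        have := sq_nonneg (‖⟪k n, J y⟫_ℂ‖ - ‖⟪k n, J (J x)⟫_ℂ‖)
        nlinarith
      have hns : Summable (fun n => ‖⟪k n, J y⟫_ℂ * ⟪x, k n⟫_ℂ‖) := by
        simpa [norm_mul, hbn] using hnorm_summable
      have h1 : ‖⟪x, S y⟫_ℂ‖ ≤ ∑' n, ‖⟪k n, J y⟫_ℂ‖ * ‖⟪k n, J (J x)⟫_ℂ‖ := by
        rw [← hsum.tsum_eq]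
        calc ‖∑' n, ⟪k n, J y⟫_ℂ * ⟪x, k n⟫_ℂ‖ ≤ ∑' n, ‖⟪k n, J y⟫_ℂ * ⟪x, k n⟫_ℂ‖ :=
              norm_tsum_le_tsum_norm hns
          _ = ∑' n, ‖⟪k n, J y⟫_ℂ‖ * ‖⟪k n, J (J x)⟫_ℂ‖ := by
              congr 1; funext n; rw [norm_mul, hbn]
      have h2 : ∑' n, ‖⟪k n, J y⟫_ℂ‖ * ‖⟪k n, J (J x)⟫_ℂ‖ ≤
          Real.sqrt (∑' n, ‖⟪k n, J y⟫_ℂ‖ ^ 2) * Real.sqrt (∑' n, ‖⟪k n, J (J x)⟫_ℂ‖ ^ 2) :=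
        tsum_mul_le_sqrt_mul_sqrt_aux _ _ (fun n => norm_nonneg _) (fun n => norm_nonneg _)
          (hk y).1 (hk (J x)).1
      have h3 : (∑' n, ‖⟪k n, J (J x)⟫_ℂ‖ ^ 2) ≤ B * ‖x‖ ^ 2 := by
        have := (hk (J x)).2.2
        rwa [hnormJ] at this
      have hQnn : 0 ≤ ∑' n, ‖⟪k n, J y⟫_ℂ‖ ^ 2 := tsum_nonneg fun n => sq_nonneg _
      have h4 : Real.sqrt (∑' n, ‖⟪k n, J (J x)⟫_ℂ‖ ^ 2) ≤ Real.sqrt B * ‖x‖ := by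
        rw [← Real.sqrt_sq (norm_nonneg x), ← Real.sqrt_mul hB.le]
        exact Real.sqrt_le_sqrt h3
      have hxnorm : ‖x‖ ^ 2 = ‖⟪x, S y⟫_ℂ‖ := by
        have hn : ‖((‖x‖ : ℂ)) ^ 2‖ = ‖x‖ ^ 2 := by
          rw [norm_pow, Complex.norm_real, norm_norm]
        rw [hxx, hn]
      have h5 : ‖x‖ ^ 2 ≤ Real.sqrt (∑' n, ‖⟪k n, J y⟫_ℂ‖ ^ 2) * (Real.sqrt B * ‖x‖) := by
        calc ‖x‖ ^ 2 = ‖⟪x, S y⟫_ℂ‖ := hxnorm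
          _ ≤ ∑' n, ‖⟪k n, J y⟫_ℂ‖ * ‖⟪k n, J (J x)⟫_ℂ‖ := h1
          _ ≤ Real.sqrt (∑' n, ‖⟪k n, J y⟫_ℂ‖ ^ 2) *
              Real.sqrt (∑' n, ‖⟪k n, J (J x)⟫_ℂ‖ ^ 2) := h2
          _ ≤ Real.sqrt (∑' n, ‖⟪k n, J y⟫_ℂ‖ ^ 2) * (Real.sqrt B * ‖x‖) := by
              exact mul_le_mul_of_nonneg_left h4 (Real.sqrt_nonneg _)
      -- Square both sides appropriately
      have hxpos : 0 < ‖x‖ := norm_pos_iff.mpr hx0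
      have h6 : ‖x‖ ≤ Real.sqrt (∑' n, ‖⟪k n, J y⟫_ℂ‖ ^ 2) * Real.sqrt B := by
        have := h5
        nlinarith [Real.sqrt_nonneg (∑' n, ‖⟪k n, J y⟫_ℂ‖ ^ 2), Real.sqrt_nonneg B]
      have h7 : ‖x‖ ^ 2 ≤ (∑' n, ‖⟪k n, J y⟫_ℂ‖ ^ 2) * B := by
        have hsq := mul_self_nonneg (Real.sqrt (∑' n, ‖⟪k n, J y⟫_ℂ‖ ^ 2) * Real.sqrt B - ‖x‖)
        have e1 : Real.sqrt (∑' n, ‖⟪k n, J y⟫_ℂ‖ ^ 2) ^ 2 = ∑' n, ‖⟪k n, J y⟫_ℂ‖ ^ 2 :=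
          Real.sq_sqrt hQnn
        have e2 : Real.sqrt B ^ 2 = B := Real.sq_sqrt hB.le
        calc ‖x‖ ^ 2 ≤ (Real.sqrt (∑' n, ‖⟪k n, J y⟫_ℂ‖ ^ 2) * Real.sqrt B) ^ 2 := by
              apply sq_le_sq' _ h6
              nlinarith [Real.sqrt_nonneg (∑' n, ‖⟪k n, J y⟫_ℂ‖ ^ 2), Real.sqrt_nonneg B,
                hxpos.le]
          _ = (∑' n, ‖⟪k n, J y⟫_ℂ‖ ^ 2) * B := by rw [mul_pow, e1, e2]
      rw [inv_mul_le_iff₀ hB]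
      linarith [h7]
    · -- upper bound Q ≤ A⁻¹‖x‖²
      rw [hrw]
      have hlow : A * ‖y‖ ^ 2 ≤ ∑' n, ‖⟪k n, J y⟫_ℂ‖ ^ 2 := (hk y).2.1
      have hup : (∑' n, ‖⟪k n, J y⟫_ℂ‖ ^ 2) ≤ ‖y‖ * ‖x‖ := by
        rw [hQx]
        calc Complex.re ⟪J y, x⟫_ℂ ≤ ‖⟪J y, x⟫_ℂ‖ := Complex.re_le_norm _
          _ ≤ ‖J y‖ * ‖x‖ := norm_inner_le_norm _ _
          _ = ‖y‖ * ‖x‖ := by rw [hnormJ]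
      have hyx : A * ‖y‖ ≤ ‖x‖ := by
        rcases eq_or_lt_of_le (norm_nonneg y) with h0 | h0
        · rw [← h0]; simp [norm_nonneg x]
        · nlinarith
      calc (∑' n, ‖⟪k n, J y⟫_ℂ‖ ^ 2) ≤ ‖y‖ * ‖x‖ := hup
        _ ≤ A⁻¹ * ‖x‖ ^ 2 := by
            have hyb : ‖y‖ ≤ A⁻¹ * ‖x‖ := by
              rw [le_inv_mul_iff₀ hA]; exact hyx
            nlinarith [mul_le_mul_of_nonneg_right hyb (norm_nonneg x), norm_nonneg x]
  · -- dual frame expansion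
    intro x
    have h := hS (Sinv x)
    rw [hSinv₂] at h
    have heq : (fun n => ⟪Sinv (k n), J x⟫_ℂ • k n) =
        (fun n => ⟪k n, J (Sinv x)⟫_ℂ • k n) := by
      funext n; rw [hkey]
    rw [heq]
    exact h
end
end

section
/- Let (k_n)_{n∈ℕ} be a frame for the Krein space (H,[·,·]) with bounds 0 < A ≤ B, and let S be its frame operator (S x = Σ_n [k_n,x] k_n), which is invertible with bounded inverse S⁻¹. Then (J S⁻¹ k_n)_{n∈ℕ} is a frame for the Krein space (H,[·,·]) with bounds B⁻¹ ≤ A⁻¹, and it is a dual frame of (J k_n)_{n∈ℕ}: for every k ∈ H, k = Σ_n [J S⁻¹ k_n, k]·J k_n. -/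
open scoped InnerProductSpace

noncomputable section

theorem canonical_dual_frame_of_J_frame {H : Type*} [NormedAddCommGroup H] [InnerProductSpace ℂ H] [CompleteSpace H]
    (J : H →L[ℂ] H) (hJsa : ∀ x y : H, ⟪J x, y⟫_ℂ = ⟪x, J y⟫_ℂ)
    (hJ2 : ∀ x : H, J (J x) = x)
    (k : ℕ → H) (A B : ℝ) (hA : 0 < A) (hAB : A ≤ B)
    (hk : IsKreinFrame J k A B) (S Sinv : H →L[ℂ] H)
    (hS : ∀ x : H, HasSum (fun n => ⟪k n, J x⟫_ℂ • k n) (S x))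
    (hSinv₁ : ∀ x : H, Sinv (S x) = x) (hSinv₂ : ∀ x : H, S (Sinv x) = x) :
    IsKreinFrame J (fun n => J (Sinv (k n))) B⁻¹ A⁻¹ ∧
      ∀ x : H, HasSum (fun n => ⟪J (Sinv (k n)), J x⟫_ℂ • J (k n)) x := by
  have hB : 0 < B := lt_of_lt_of_le hA hAB
  -- basic facts about J
  have hJJ : ∀ u v : H, ⟪J u, J v⟫_ℂ = ⟪u, v⟫_ℂ := by
    intro u v; rw [hJsa, hJ2]
  -- tsum expansions
  have hsum1 : ∀ u v : H, HasSum (fun n => ⟪k n, J u⟫_ℂ * ⟪J v, k n⟫_ℂ) ⟪J v, S u⟫_ℂ := by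
    intro u v
    have := (hS u).mapL (innerSL ℂ (J v))
    simpa [inner_smul_right] using this
  -- J S is self-adjoint
  have hsym : ∀ u v : H, ⟪S u, J v⟫_ℂ = ⟪J u, S v⟫_ℂ := by
    intro u v
    have h := (hsum1 u v).star
    simp only [RCLike.star_def, map_mul, inner_conj_symm] at h
    refine HasSum.unique (h.congr_fun fun n => ?_) (hsum1 v u)
    ring
  -- positivity identity
  have hpos : ∀ u : H, ⟪J u, S u⟫_ℂ = ((∑' n, ‖⟪k n, J u⟫_ℂ‖ ^ 2 : ℝ) : ℂ) := by
    intro u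
    refine (hsum1 u u).unique ?_
    have h := Complex.hasSum_ofReal.mpr (hk u).1.hasSum
    refine h.congr_fun fun n => ?_
    rw [← inner_conj_symm (J u) (k n), Complex.mul_conj]
    norm_cast
    rw [Complex.normSq_eq_norm_sq]
  -- coefficient identity
  have coeff : ∀ (n : ℕ) (x : H),
      ⟪J (Sinv (k n)), J x⟫_ℂ = ⟪k n, J (Sinv (J x))⟫_ℂ := by
    intro n x
    have h1 : ⟪J (Sinv (k n)), J x⟫_ℂ = ⟪Sinv (k n), x⟫_ℂ := hJJ _ _
    have h2 : (k n) = S (Sinv (k n)) := (hSinv₂ (k n)).symm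
    rw [h1]
    conv_rhs => rw [h2]
    rw [hsym (Sinv (k n)) (Sinv (J x)), hSinv₂, hJJ]
  constructor
  · intro x
    set w : H := Sinv (J x) with hw
    -- rewrite coefficients
    have hco : (fun n => ‖⟪J (Sinv (k n)), J x⟫_ℂ‖ ^ 2)
        = fun n => ‖⟪k n, J w⟫_ℂ‖ ^ 2 := by
      funext n; rw [coeff n x]
    have hsummable : Summable (fun n => ‖⟪(fun n => J (Sinv (k n))) n, J x⟫_ℂ‖ ^ 2) := by
      show Summable (fun n => ‖⟪J (Sinv (k n)), J x⟫_ℂ‖ ^ 2)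
      rw [hco]
      exact (hk w).1
    set s : ℝ := ∑' n, ‖⟪k n, J w⟫_ℂ‖ ^ 2 with hs
    have hts : ∑' n, ‖⟪(fun n => J (Sinv (k n))) n, J x⟫_ℂ‖ ^ 2 = s :=
      tsum_congr fun n => by rw [coeff n x]
    have hSw : S w = J x := hSinv₂ (J x)
    have hsx : (s : ℂ) = ⟪w, x⟫_ℂ := by
      rw [← hpos w, hSw, hJJ]
    have hs_nonneg : 0 ≤ s := tsum_nonneg fun n => by positivity
    -- upper bound
    have hub : s ≤ ‖w‖ * ‖x‖ := by
      have : s = (⟪w, x⟫_ℂ).re := by rw [← hsx]; simp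
      rw [this]
      calc (⟪w, x⟫_ℂ).re ≤ ‖⟪w, x⟫_ℂ‖ := Complex.re_le_norm _
        _ ≤ ‖w‖ * ‖x‖ := norm_inner_le_norm _ _
    have hlbw : A * ‖w‖ ^ 2 ≤ s := (hk w).2.1
    -- lower bound via Cauchy-Schwarz
    have hlb : ‖x‖ ^ 2 ≤ B * s := by
      set t : ℝ := ∑' n, ‖⟪k n, J x⟫_ℂ‖ ^ 2 with ht
      have htB : t ≤ B * ‖x‖ ^ 2 := (hk x).2.2
      have ht_nonneg : 0 ≤ t := tsum_nonneg fun n => by positivity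
      -- summability of the products
      have hprod : Summable (fun n => ‖⟪k n, J w⟫_ℂ‖ * ‖⟪k n, J x⟫_ℂ‖) := by
        refine Summable.of_nonneg_of_le (fun n => by positivity)
          (fun n => ?_) (((hk w).1.add (hk x).1).div_const 2)
        have := sq_nonneg (‖⟪k n, J w⟫_ℂ‖ - ‖⟪k n, J x⟫_ℂ‖)
        nlinarith
      -- Cauchy-Schwarz for the tsum
      have hCS : ∑' n, ‖⟪k n, J w⟫_ℂ‖ * ‖⟪k n, J x⟫_ℂ‖ ≤ Real.sqrt (s * t) := by
        refine Summable.tsum_le_of_sum_le hprod fun F => ?_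
        rw [← Real.sqrt_sq (Finset.sum_nonneg fun n _ => by positivity)]
        refine Real.sqrt_le_sqrt ?_
        calc (∑ n ∈ F, ‖⟪k n, J w⟫_ℂ‖ * ‖⟪k n, J x⟫_ℂ‖) ^ 2
            ≤ (∑ n ∈ F, ‖⟪k n, J w⟫_ℂ‖ ^ 2) * ∑ n ∈ F, ‖⟪k n, J x⟫_ℂ‖ ^ 2 :=
              Finset.sum_mul_sq_le_sq_mul_sq F _ _
          _ ≤ s * t := by
              refine mul_le_mul ?_ ?_ (Finset.sum_nonneg fun n _ => by positivity) hs_nonneg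
              · exact Summable.sum_le_tsum F (fun n _ => by positivity) (hk w).1
              · exact Summable.sum_le_tsum F (fun n _ => by positivity) (hk x).1
      have hxx : ‖x‖ ^ 2 ≤ Real.sqrt (s * t) := by
        have h1 : (‖x‖ ^ 2 : ℝ) = (⟪J x, S w⟫_ℂ).re := by
          rw [hSw, hJJ]
          exact (inner_self_eq_norm_sq (𝕜 := ℂ) x).symm
        have hnorm : ∀ n : ℕ, ‖⟪k n, J w⟫_ℂ * ⟪J x, k n⟫_ℂ‖
            = ‖⟪k n, J w⟫_ℂ‖ * ‖⟪k n, J x⟫_ℂ‖ := by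
          intro n
          rw [norm_mul, ← inner_conj_symm (J x) (k n), RCLike.norm_conj]
        have h2 : ‖⟪J x, S w⟫_ℂ‖ ≤ ∑' n, ‖⟪k n, J w⟫_ℂ * ⟪J x, k n⟫_ℂ‖ := by
          rw [← (hsum1 w x).tsum_eq]
          exact norm_tsum_le_tsum_norm (hprod.congr fun n => (hnorm n).symm)
        have h3 : ∑' n, ‖⟪k n, J w⟫_ℂ * ⟪J x, k n⟫_ℂ‖
            = ∑' n, ‖⟪k n, J w⟫_ℂ‖ * ‖⟪k n, J x⟫_ℂ‖ :=
          tsum_congr hnorm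
        calc ‖x‖ ^ 2 = (⟪J x, S w⟫_ℂ).re := h1
          _ ≤ ‖⟪J x, S w⟫_ℂ‖ := Complex.re_le_norm _
          _ ≤ ∑' n, ‖⟪k n, J w⟫_ℂ * ⟪J x, k n⟫_ℂ‖ := h2
          _ = ∑' n, ‖⟪k n, J w⟫_ℂ‖ * ‖⟪k n, J x⟫_ℂ‖ := h3
          _ ≤ Real.sqrt (s * t) := hCS
      have h4 : (‖x‖ ^ 2) ^ 2 ≤ s * t := by
        calc (‖x‖ ^ 2) ^ 2 ≤ Real.sqrt (s * t) ^ 2 := by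
              have := sq_nonneg ‖x‖
              gcongr
          _ = s * t := Real.sq_sqrt (mul_nonneg hs_nonneg ht_nonneg)
      by_cases hx0 : ‖x‖ = 0
      · rw [hx0]
        simpa using mul_nonneg hB.le hs_nonneg
      · have hx : 0 < ‖x‖ ^ 2 := by positivity
        have h5 : (‖x‖ ^ 2) * (‖x‖ ^ 2) ≤ (B * s) * (‖x‖ ^ 2) := by
          nlinarith [mul_le_mul_of_nonneg_left htB hs_nonneg]
        exact le_of_mul_le_mul_right h5 hx
    refine ⟨hsummable, ?_, ?_⟩
    · rw [hts]
      rw [inv_mul_le_iff₀ hB]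
      exact hlb
    · rw [hts]
      have hwx : A * ‖w‖ ≤ ‖x‖ ∨ ‖w‖ = 0 := by
        rcases eq_or_ne ‖w‖ 0 with h | h
        · exact Or.inr h
        · left
          have hwpos : 0 < ‖w‖ := lt_of_le_of_ne (norm_nonneg w) (Ne.symm h)
          nlinarith
      rcases hwx with h | h
      · rw [le_inv_mul_iff₀ hA]
        nlinarith [norm_nonneg x, norm_nonneg w]
      · have : s ≤ 0 := by rw [h] at hub; simpa using hub
        have : s = 0 := le_antisymm this hs_nonneg
        rw [this]
        positivity
  · intro x
    have h := (hS (Sinv (J x))).mapL J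
    rw [hSinv₂, hJ2] at h
    refine h.congr_fun fun n => ?_
    rw [coeff n x]
    simp
end
end

section
/- Let (k_n)_{n∈ℕ} be a frame for the Krein space (H,[·,·]) with bounds 0 < A ≤ B, and let S be its frame operator (S x = Σ_n [k_n,x] k_n), which is invertible with bounded inverse S⁻¹. Then (J S⁻¹ k_n)_{n∈ℕ} is a dual frame of (k_n)_{n∈ℕ} for the Hilbert space H: it is a frame for the Hilbert space H with bounds B⁻¹ ≤ A⁻¹, and for every k ∈ H, k = Σ_n ⟨J S⁻¹ k_n, k⟩·k_n. -/
open scoped InnerProductSpace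

noncomputable section

/-- Cauchy–Schwarz for infinite sums of nonnegative reals. -/
lemma tsum_cauchy_schwarz_aux (a b : ℕ → ℝ) (ha : ∀ n, 0 ≤ a n) (hb : ∀ n, 0 ≤ b n)
    (ha2 : Summable (fun n => a n ^ 2)) (hb2 : Summable (fun n => b n ^ 2)) :
    Summable (fun n => a n * b n) ∧
      ∑' n, a n * b n ≤ Real.sqrt (∑' n, a n ^ 2) * Real.sqrt (∑' n, b n ^ 2) := by
  have key : ∀ s : Finset ℕ, ∑ n ∈ s, a n * b n ≤
      Real.sqrt (∑' n, a n ^ 2) * Real.sqrt (∑' n, b n ^ 2) := by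
    intro s
    refine (Real.sum_mul_le_sqrt_mul_sqrt s a b).trans ?_
    have h1 : ∑ n ∈ s, a n ^ 2 ≤ ∑' n, a n ^ 2 :=
      Summable.sum_le_tsum s (fun n _ => by positivity) ha2
    have h2 : ∑ n ∈ s, b n ^ 2 ≤ ∑' n, b n ^ 2 :=
      Summable.sum_le_tsum s (fun n _ => by positivity) hb2
    have hn1 : (0:ℝ) ≤ ∑ n ∈ s, a n ^ 2 := by positivity
    have hn2 : (0:ℝ) ≤ ∑ n ∈ s, b n ^ 2 := by positivity
    exact mul_le_mul (Real.sqrt_le_sqrt h1) (Real.sqrt_le_sqrt h2)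
      (Real.sqrt_nonneg _) (Real.sqrt_nonneg _)
  have hsum : Summable (fun n => a n * b n) :=
    summable_of_sum_le (fun n => mul_nonneg (ha n) (hb n)) key
  exact ⟨hsum, Summable.tsum_le_of_sum_le hsum key⟩

theorem canonical_dual_frame_hilbert {H : Type*} [NormedAddCommGroup H] [InnerProductSpace ℂ H] [CompleteSpace H]
    (J : H →L[ℂ] H) (hJsa : ∀ x y : H, ⟪J x, y⟫_ℂ = ⟪x, J y⟫_ℂ)
    (hJ2 : ∀ x : H, J (J x) = x)
    (k : ℕ → H) (A B : ℝ) (hA : 0 < A) (hAB : A ≤ B)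
    (hk : IsKreinFrame J k A B) (S Sinv : H →L[ℂ] H)
    (hS : ∀ x : H, HasSum (fun n => ⟪k n, J x⟫_ℂ • k n) (S x))
    (hSinv₁ : ∀ x : H, Sinv (S x) = x) (hSinv₂ : ∀ x : H, S (Sinv x) = x) :
    IsHilbertFrame (fun n => J (Sinv (k n))) B⁻¹ A⁻¹ ∧
      ∀ x : H, HasSum (fun n => ⟪J (Sinv (k n)), x⟫_ℂ • k n) x := by
  have hB : 0 < B := lt_of_lt_of_le hA hAB
  -- inner products against S expand as series
  have hsum_inner : ∀ u v : H,
      HasSum (fun n => ⟪k n, J v⟫_ℂ * ⟪u, k n⟫_ℂ) ⟪u, S v⟫_ℂ := by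
    intro u v
    simpa [inner_smul_right] using (hS v).mapL (innerSL ℂ u)
  -- the sesquilinear form (u,v) ↦ ⟪J u, S v⟫ is Hermitian
  have herm : ∀ u v : H, ⟪J u, S v⟫_ℂ = (starRingEnd ℂ) ⟪J v, S u⟫_ℂ := by
    intro u v
    have h1 := hsum_inner (J u) v
    have h2 := (hsum_inner (J v) u).star
    refine h1.unique ?_
    convert h2 using 2 with n
    simp only [star_mul', RCLike.star_def, inner_conj_symm]
    ring
    rfl
  -- adjoint relation for Sinv
  have adj : ∀ a b : H, ⟪Sinv a, b⟫_ℂ = ⟪a, J (Sinv (J b))⟫_ℂ := by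
    intro a b
    have hb : J (S (Sinv (J b))) = b := by rw [hSinv₂, hJ2]
    calc ⟪Sinv a, b⟫_ℂ = ⟪Sinv a, J (S (Sinv (J b)))⟫_ℂ := by rw [hb]
      _ = ⟪J (Sinv a), S (Sinv (J b))⟫_ℂ := (hJsa _ _).symm
      _ = (starRingEnd ℂ) ⟪J (Sinv (J b)), S (Sinv a)⟫_ℂ := herm _ _
      _ = (starRingEnd ℂ) ⟪J (Sinv (J b)), a⟫_ℂ := by rw [hSinv₂]
      _ = ⟪a, J (Sinv (J b))⟫_ℂ := inner_conj_symm _ _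
  have key2 : ∀ (n : ℕ) (x : H), ⟪J (Sinv (k n)), x⟫_ℂ = ⟪k n, J (Sinv x)⟫_ℂ := by
    intro n x
    rw [hJsa, adj, hJ2]
  -- J is an isometry
  have hJn : ∀ u : H, ‖J u‖ = ‖u‖ := by
    intro u
    have h : ⟪J u, J u⟫_ℂ = ⟪u, u⟫_ℂ := by rw [hJsa, hJ2]
    have h2 : ‖J u‖ ^ 2 = ‖u‖ ^ 2 := by
      rw [← inner_self_eq_norm_sq (𝕜 := ℂ), ← inner_self_eq_norm_sq (𝕜 := ℂ), h]
    calc ‖J u‖ = Real.sqrt (‖J u‖ ^ 2) := (Real.sqrt_sq (norm_nonneg _)).symm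
      _ = Real.sqrt (‖u‖ ^ 2) := by rw [h2]
      _ = ‖u‖ := Real.sqrt_sq (norm_nonneg _)
  constructor
  · -- the frame property
    intro x
    set y := Sinv x with hy
    have hx : S y = x := hSinv₂ x
    obtain ⟨hySum, hyLo, hyHi⟩ := hk y
    simp only [key2, ← hy]
    refine ⟨hySum, ?_, ?_⟩
    · -- lower bound B⁻¹ ‖x‖² ≤ Σ
      set Sg : ℝ := ∑' n, ‖⟪k n, J y⟫_ℂ‖ ^ 2 with hSg
      have hSnn : 0 ≤ Sg := tsum_nonneg fun n => by positivity
      -- Hilbert frame property of k itself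
      have hkx := hk (J x)
      simp only [hJ2, hJn] at hkx
      obtain ⟨hxSum, _, hxHi⟩ := hkx
      -- ‖x‖² as a series
      have h2 : HasSum (fun n => ⟪k n, J y⟫_ℂ * ⟪x, k n⟫_ℂ) ⟪x, x⟫_ℂ := by
        have := hsum_inner x y; rwa [hx] at this
      have hCS := tsum_cauchy_schwarz_aux (fun n => ‖⟪k n, J y⟫_ℂ‖)
        (fun n => ‖⟪k n, x⟫_ℂ‖) (fun n => norm_nonneg _) (fun n => norm_nonneg _)
        hySum hxSum
      have hnorm_eq : ∀ n, ‖⟪k n, J y⟫_ℂ * ⟪x, k n⟫_ℂ‖ = ‖⟪k n, J y⟫_ℂ‖ * ‖⟪k n, x⟫_ℂ‖ := by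
        intro n; rw [norm_mul, norm_inner_symm x (k n)]
      have hsumnorm : Summable (fun n => ‖⟪k n, J y⟫_ℂ * ⟪x, k n⟫_ℂ‖) := by
        simpa only [hnorm_eq] using hCS.1
      have hbound : ‖x‖ ^ 2 ≤ Real.sqrt Sg * Real.sqrt (B * ‖x‖ ^ 2) := by
        calc ‖x‖ ^ 2 = (⟪x, x⟫_ℂ).re := (inner_self_eq_norm_sq (𝕜 := ℂ) x).symm
          _ ≤ ‖⟪x, x⟫_ℂ‖ := Complex.re_le_norm _
          _ = ‖∑' n, ⟪k n, J y⟫_ℂ * ⟪x, k n⟫_ℂ‖ := by rw [h2.tsum_eq]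
          _ ≤ ∑' n, ‖⟪k n, J y⟫_ℂ * ⟪x, k n⟫_ℂ‖ := norm_tsum_le_tsum_norm hsumnorm
          _ = ∑' n, ‖⟪k n, J y⟫_ℂ‖ * ‖⟪k n, x⟫_ℂ‖ := by simp only [hnorm_eq]
          _ ≤ Real.sqrt Sg * Real.sqrt (∑' n, ‖⟪k n, x⟫_ℂ‖ ^ 2) := hCS.2
          _ ≤ Real.sqrt Sg * Real.sqrt (B * ‖x‖ ^ 2) := by
              exact mul_le_mul_of_nonneg_left (Real.sqrt_le_sqrt hxHi) (Real.sqrt_nonneg _)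
      have h6 : (‖x‖ ^ 2) ^ 2 ≤ Sg * (B * ‖x‖ ^ 2) := by
        calc (‖x‖ ^ 2) ^ 2 ≤ (Real.sqrt Sg * Real.sqrt (B * ‖x‖ ^ 2)) ^ 2 := by
              refine pow_le_pow_left₀ (by positivity) hbound 2
          _ = Sg * (B * ‖x‖ ^ 2) := by
              rw [mul_pow, Real.sq_sqrt hSnn, Real.sq_sqrt (by positivity)]
      rcases eq_or_ne x 0 with hx0 | hx0
      · simpa [hx0] using hSnn
      · have hxpos : 0 < ‖x‖ := norm_pos_iff.mpr hx0
        rw [inv_mul_le_iff₀ hB, mul_comm]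
        nlinarith [pow_pos hxpos 2]
    · -- upper bound Σ ≤ A⁻¹ ‖x‖²
      set Sg : ℝ := ∑' n, ‖⟪k n, J y⟫_ℂ‖ ^ 2 with hSg
      have h1 : HasSum (fun n => ‖⟪k n, J y⟫_ℂ‖ ^ 2) (⟪J y, x⟫_ℂ).re := by
        have h := (hsum_inner (J y) y).mapL Complex.reCLM
        rw [hx] at h
        convert h using 2 with n
        rw [← inner_conj_symm (J y) (k n)]
        simp only [Complex.reCLM_apply, Complex.mul_conj]
        simp [Complex.sq_norm]
        rfl
      have hSgeq : Sg = (⟪J y, x⟫_ℂ).re := h1.tsum_eq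
      have habs : Sg ≤ ‖y‖ * ‖x‖ := by
        rw [hSgeq]
        calc (⟪J y, x⟫_ℂ).re ≤ ‖⟪J y, x⟫_ℂ‖ := Complex.re_le_norm _
          _ ≤ ‖J y‖ * ‖x‖ := norm_inner_le_norm _ _
          _ = ‖y‖ * ‖x‖ := by rw [hJn]
      have hlow : A * ‖y‖ ^ 2 ≤ Sg := hyLo
      rw [inv_mul_eq_div, le_div_iff₀ hA, mul_comm]
      nlinarith [sq_nonneg (A * ‖y‖ - ‖x‖), norm_nonneg y, norm_nonneg x,
        mul_le_mul_of_nonneg_left habs hA.le, mul_le_mul_of_nonneg_left hlow hA.le]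
  · -- the reconstruction formula
    intro x
    have h := hS (Sinv x)
    rw [hSinv₂] at h
    simpa only [key2] using h

end
end

section
/- Let (k_n)_{n∈ℕ} be a tight frame for the Krein space (H,[·,·]) with frame bounds A = B = 1 (i.e. ‖x‖² = Σ_n |[k_n,x]|² for all x ∈ H), and assume |[k_n, k_n]| = 1 for all n. Then (k_n) is a J-orthonormalized basis for H: [k_n, k_m] = 0 for all n ≠ m, |[k_n, k_n]| = 1 for all n, and the linear span of {k_n : n ∈ ℕ} is dense in H. -/
open scoped InnerProductSpace

noncomputable section

theorem tight_frame_is_J_orthonormal_basis {H : Type*} [NormedAddCommGroup H] [InnerProductSpace ℂ H] [CompleteSpace H]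
    (J : H →L[ℂ] H) (hJsa : ∀ x y : H, ⟪J x, y⟫_ℂ = ⟪x, J y⟫_ℂ)
    (hJ2 : ∀ x : H, J (J x) = x)
    (k : ℕ → H)
    (htight : ∀ x : H, HasSum (fun n => ‖⟪k n, J x⟫_ℂ‖ ^ 2) (‖x‖ ^ 2))
    (hnorm : ∀ n : ℕ, ‖⟪k n, J (k n)⟫_ℂ‖ = 1) :
    (∀ n m : ℕ, n ≠ m → ⟪k n, J (k m)⟫_ℂ = 0) ∧
      (∀ n : ℕ, ‖⟪k n, J (k n)⟫_ℂ‖ = 1) ∧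
      Dense (↑(Submodule.span ℂ (Set.range k)) : Set H) := by
  -- J is an isometry
  have hJiso : ∀ x : H, ‖J x‖ = ‖x‖ := by
    intro x
    have h : ⟪J x, J x⟫_ℂ = ⟪x, x⟫_ℂ := by rw [hJsa, hJ2]
    rw [inner_self_eq_norm_sq_to_K (𝕜 := ℂ), inner_self_eq_norm_sq_to_K (𝕜 := ℂ)] at h
    have h2 : ‖J x‖ ^ 2 = ‖x‖ ^ 2 := by exact_mod_cast h
    nlinarith [norm_nonneg (J x), norm_nonneg x]
  -- norm of each k m is 1
  have hksq : ∀ m : ℕ, ‖k m‖ = 1 := by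
    intro m
    have h1 : HasSum (fun n => ‖⟪k n, J (k m)⟫_ℂ‖ ^ 2) (‖k m‖ ^ 2) := htight (k m)
    have h2 : HasSum (fun n => ‖⟪k n, k m⟫_ℂ‖ ^ 2) (‖k m‖ ^ 2) := by
      have := htight (J (k m))
      simpa [hJ2, hJiso] using this
    have hge1 : (1 : ℝ) ≤ ‖k m‖ ^ 2 := by
      have := le_hasSum h1 m (fun n _ => by positivity)
      simpa [hnorm m] using this
    have hterm : ‖⟪k m, k m⟫_ℂ‖ ^ 2 = ‖k m‖ ^ 4 := by
      rw [inner_self_eq_norm_sq_to_K (𝕜 := ℂ)]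
      simp [RCLike.norm_ofReal, abs_of_nonneg (norm_nonneg (k m))]
      ring
    have hle : ‖k m‖ ^ 4 ≤ ‖k m‖ ^ 2 := by
      have := le_hasSum h2 m (fun n _ => by positivity)
      rwa [hterm] at this
    nlinarith [norm_nonneg (k m)]
  -- orthogonality in plain inner product
  have horth : ∀ n m : ℕ, n ≠ m → ⟪k n, k m⟫_ℂ = 0 := by
    intro n m hnm
    have h2 : HasSum (fun j => ‖⟪k j, k m⟫_ℂ‖ ^ 2) (‖k m‖ ^ 2) := by
      have := htight (J (k m))
      simpa [hJ2, hJiso] using this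
    have hterm : ‖⟪k m, k m⟫_ℂ‖ ^ 2 = 1 := by
      rw [inner_self_eq_norm_sq_to_K (𝕜 := ℂ)]
      simp [RCLike.norm_ofReal, hksq m]
    have hsum2 : (∑ j ∈ ({n, m} : Finset ℕ), ‖⟪k j, k m⟫_ℂ‖ ^ 2) ≤ ‖k m‖ ^ 2 :=
      sum_le_hasSum _ (fun j _ => by positivity) h2
    rw [Finset.sum_pair hnm, hterm] at hsum2
    have : ‖⟪k n, k m⟫_ℂ‖ ^ 2 ≤ 0 := by
      have := hksq m; nlinarith
    have h0 : ‖⟪k n, k m⟫_ℂ‖ = 0 := by nlinarith [norm_nonneg ⟪k n, k m⟫_ℂ]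
    simpa using h0
  -- J k m = c • k m
  have hJk : ∀ m : ℕ, ∃ c : ℂ, c ≠ 0 ∧ J (k m) = c • k m := by
    intro m
    have hk0 : k m ≠ 0 := by
      intro h; have := hksq m; rw [h] at this; simp at this
    have hJk0 : J (k m) ≠ 0 := by
      intro h
      have h2 := hJiso (k m); rw [h] at h2; simp at h2
      exact hk0 (norm_eq_zero.mp h2.symm)
    have heq : ‖⟪k m, J (k m)⟫_ℂ‖ = ‖k m‖ * ‖J (k m)‖ := by
      rw [hnorm m, hksq m, hJiso, hksq m]; norm_num
    exact (norm_inner_eq_norm_iff hk0 hJk0).1 heq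
  refine ⟨?_, hnorm, ?_⟩
  · intro n m hnm
    obtain ⟨c, _, hc⟩ := hJk m
    rw [hc, inner_smul_right, horth n m hnm, mul_zero]
  · have hbot : ∀ x ∈ (Submodule.span ℂ (Set.range k))ᗮ, x = 0 := by
      intro x hx
      have hinner : ∀ n : ℕ, ⟪k n, x⟫_ℂ = 0 := by
        intro n
        exact (Submodule.mem_orthogonal _ x).1 hx (k n) (Submodule.subset_span ⟨n, rfl⟩)
      have h := htight (J x)
      have h0 : HasSum (fun n : ℕ => (0 : ℝ)) (‖J x‖ ^ 2) := by
        convert h using 2 with n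
        rw [hJ2, hinner n]; simp
      have := h0.unique hasSum_zero
      have hx0 : ‖x‖ = 0 := by rw [← hJiso x]; nlinarith [norm_nonneg (J x)]
      simpa using hx0
    have htop : (Submodule.span ℂ (Set.range k)).topologicalClosure = ⊤ := by
      rw [Submodule.topologicalClosure_eq_top_iff, Submodule.eq_bot_iff]
      exact hbot
    rw [dense_iff_closure_eq, ← Submodule.topologicalClosure_coe, htop, Submodule.top_coe]
end
end

section
/- Let P : H → H be a bounded linear operator with P² = P and P* = P (an orthogonal projection) that commutes with J (P∘J = J∘P). If (k_n)_{n∈ℕ} is a frame for the Krein space (H,[·,·]) with bounds 0 < A ≤ B, then for every x in the range of P one has A‖x‖² ≤ Σ_n |[P k_n, x]|² ≤ B‖x‖², i.e. (P k_n)_{n∈ℕ} is a frame with bounds A ≤ B for the Krein subspace P(H) equipped with the restricted Krein inner product. -/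
open scoped InnerProductSpace

noncomputable section

theorem projection_of_frame_is_frame {H : Type*} [NormedAddCommGroup H] [InnerProductSpace ℂ H] [CompleteSpace H]
    (J : H →L[ℂ] H) (hJsa : ∀ x y : H, ⟪J x, y⟫_ℂ = ⟪x, J y⟫_ℂ)
    (hJ2 : ∀ x : H, J (J x) = x)
    (P : H →L[ℂ] H) (hP2 : ∀ x : H, P (P x) = P x)
    (hPsa : ∀ x y : H, ⟪P x, y⟫_ℂ = ⟪x, P y⟫_ℂ)
    (hPJ : ∀ x : H, P (J x) = J (P x))
    (k : ℕ → H) (A B : ℝ) (hA : 0 < A) (hAB : A ≤ B)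
    (hk : IsKreinFrame J k A B) :
    ∀ x : H, x ∈ Set.range P →
      Summable (fun n => ‖⟪P (k n), J x⟫_ℂ‖ ^ 2) ∧
      A * ‖x‖ ^ 2 ≤ ∑' n, ‖⟪P (k n), J x⟫_ℂ‖ ^ 2 ∧
      ∑' n, ‖⟪P (k n), J x⟫_ℂ‖ ^ 2 ≤ B * ‖x‖ ^ 2 := by
  rintro x ⟨y, rfl⟩
  have hPx : P (P y) = P y := hP2 y
  have key : ∀ n, ⟪P (k n), J (P y)⟫_ℂ = ⟪k n, J (P y)⟫_ℂ := fun n => by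
    rw [hPsa, hPJ, hPx]
  simp only [key]
  exact hk (P y)
end
end

section
/- Let P : H → H be a bounded linear operator with P² = P and P* = P (an orthogonal projection) that commutes with J (P∘J = J∘P), and let 0 < A ≤ B. Suppose (k⁺_n)_{n∈ℕ} is a sequence in the range of P with A‖x‖² ≤ Σ_n |[k⁺_n, x]|² ≤ B‖x‖² for all x in the range of P, and (k⁻_n)_{n∈ℕ} is a sequence in the range of (1−P) with A‖x‖² ≤ Σ_n |[k⁻_n, x]|² ≤ B‖x‖² for all x in the range of (1−P). Then the combined family (k⁺_n)_{n∈ℕ} ∪ (k⁻_n)_{n∈ℕ} (indexed by ℕ ⊕ ℕ) is a frame for the Krein space (H,[·,·]) with bounds A ≤ B, i.e. A‖k‖² ≤ Σ_n |[k⁺_n, k]|² + Σ_n |[k⁻_n, k]|² ≤ B‖k‖² for all k ∈ H. -/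
open scoped InnerProductSpace

noncomputable section

theorem union_of_subspace_frames_is_frame {H : Type*} [NormedAddCommGroup H] [InnerProductSpace ℂ H] [CompleteSpace H]
    (J : H →L[ℂ] H) (hJsa : ∀ x y : H, ⟪J x, y⟫_ℂ = ⟪x, J y⟫_ℂ)
    (hJ2 : ∀ x : H, J (J x) = x)
    (P : H →L[ℂ] H) (hP2 : ∀ x : H, P (P x) = P x)
    (hPsa : ∀ x y : H, ⟪P x, y⟫_ℂ = ⟪x, P y⟫_ℂ)
    (hPJ : ∀ x : H, P (J x) = J (P x))
    (A B : ℝ) (hA : 0 < A) (hAB : A ≤ B)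
    (kp km : ℕ → H)
    (hkp : ∀ n : ℕ, kp n ∈ Set.range P)
    (hkm : ∀ n : ℕ, km n ∈ Set.range ⇑(1 - P : H →L[ℂ] H))
    (hframep : ∀ x : H, x ∈ Set.range P →
      Summable (fun n => ‖⟪kp n, J x⟫_ℂ‖ ^ 2) ∧
      A * ‖x‖ ^ 2 ≤ ∑' n, ‖⟪kp n, J x⟫_ℂ‖ ^ 2 ∧
      ∑' n, ‖⟪kp n, J x⟫_ℂ‖ ^ 2 ≤ B * ‖x‖ ^ 2)
    (hframem : ∀ x : H, x ∈ Set.range ⇑(1 - P : H →L[ℂ] H) →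
      Summable (fun n => ‖⟪km n, J x⟫_ℂ‖ ^ 2) ∧
      A * ‖x‖ ^ 2 ≤ ∑' n, ‖⟪km n, J x⟫_ℂ‖ ^ 2 ∧
      ∑' n, ‖⟪km n, J x⟫_ℂ‖ ^ 2 ≤ B * ‖x‖ ^ 2) :
    ∀ x : H, Summable (fun n => ‖⟪kp n, J x⟫_ℂ‖ ^ 2) ∧
      Summable (fun n => ‖⟪km n, J x⟫_ℂ‖ ^ 2) ∧
      A * ‖x‖ ^ 2 ≤ (∑' n, ‖⟪kp n, J x⟫_ℂ‖ ^ 2) + ∑' n, ‖⟪km n, J x⟫_ℂ‖ ^ 2 ∧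
      (∑' n, ‖⟪kp n, J x⟫_ℂ‖ ^ 2) + (∑' n, ‖⟪km n, J x⟫_ℂ‖ ^ 2) ≤ B * ‖x‖ ^ 2 := by
  intro x
  set Q : H →L[ℂ] H := 1 - P with hQdef
  have hQ : ∀ z : H, Q z = z - P z := by
    intro z; simp [hQdef]
  -- rewrite each inner product
  have h1 : ∀ n, ⟪kp n, J x⟫_ℂ = ⟪kp n, J (P x)⟫_ℂ := by
    intro n
    obtain ⟨y, hy⟩ := hkp n
    rw [← hy]
    simp only [hPsa, hPJ, hP2]
  have h2 : ∀ n, ⟪km n, J x⟫_ℂ = ⟪km n, J (Q x)⟫_ℂ := by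
    intro n
    obtain ⟨y, hy⟩ := hkm n
    rw [← hy]
    simp only [hQ, inner_sub_left, map_sub, inner_sub_right, hPsa, hPJ, hP2]
    ring
  have hframeP := hframep (P x) ⟨x, rfl⟩
  have hframeQ := hframem (Q x) ⟨x, rfl⟩
  obtain ⟨s1, l1, u1⟩ := hframeP
  obtain ⟨s2, l2, u2⟩ := hframeQ
  -- orthogonality
  have horth : ⟪P x, Q x⟫_ℂ = 0 := by
    have e : ⟪P x, P x⟫_ℂ = ⟪P x, x⟫_ℂ := by rw [hPsa, hP2, ← hPsa]
    rw [hQ, inner_sub_right, e, sub_self]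
  have hnorm : ‖x‖ ^ 2 = ‖P x‖ ^ 2 + ‖Q x‖ ^ 2 := by
    have hx : x = P x + Q x := by simp [hQ]
    have := norm_add_sq (𝕜 := ℂ) (P x) (Q x)
    rw [horth] at this
    simp only [map_zero, mul_zero, add_zero] at this
    rw [← hx] at this
    linarith
  simp only [h1, h2]
  refine ⟨s1, s2, ?_, ?_⟩
  · nlinarith [norm_nonneg (P x), norm_nonneg (Q x)]
  · nlinarith [norm_nonneg (P x), norm_nonneg (Q x)]
end
end

section
/- Let W be a bounded self-adjoint operator on a complex Hilbert space H with trivial kernel (ker W = {0}) such that 0 belongs to the spectrum of W, and let |W| denote the absolute value of W (the positive square root of W*W, via continuous functional calculus). If (f_n)_{n∈ℕ} is a frame for the Hilbert space H (with some bounds 0 < A ≤ B), then the lower W-frame inequality fails for every constant: for every c > 0 there exists g ∈ H such that Σ_n |⟨f_n, W g⟩|² < c·⟨g, |W| g⟩ and ⟨g, |W| g⟩ > 0. In particular, (f_n) is not a frame for the Krein space arising from the W-metric. -/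
open scoped InnerProductSpace

noncomputable section

/-- The absolute value `|W| = √(W*W)` of a bounded operator, via the
continuous functional calculus. -/
def absCLM {H : Type*} [NormedAddCommGroup H] [InnerProductSpace ℂ H] [CompleteSpace H]
    (W : H →L[ℂ] H) : H →L[ℂ] H :=
  CFC.sqrt (star W * W)

set_option maxHeartbeats 1000000 in
set_option synthInstance.maxHeartbeats 400000 in
theorem hilbert_frame_not_krein_frame_of_zero_mem_spectrum
    {H : Type*} [NormedAddCommGroup H] [InnerProductSpace ℂ H] [CompleteSpace H]
    (W : H →L[ℂ] H) (hW : IsSelfAdjoint W)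
    (hker : ∀ x : H, W x = 0 → x = 0) (hspec : (0 : ℂ) ∈ spectrum ℂ W)
    (f : ℕ → H) (A B : ℝ) (hA : 0 < A) (hAB : A ≤ B)
    (hf : IsHilbertFrame f A B) :
    ∀ c : ℝ, 0 < c → ∃ g : H,
      (∑' n, ‖⟪f n, W g⟫_ℂ‖ ^ 2) < c * (⟪g, absCLM W g⟫_ℂ).re ∧
      0 < (⟪g, absCLM W g⟫_ℂ).re := by
  intro c hc
  have hB : (0:ℝ) < B := lt_of_lt_of_le hA hAB
  set T : H →L[ℂ] H := absCLM W with hT_def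
  have ha : (0 : H →L[ℂ] H) ≤ star W * W := star_mul_self_nonneg W
  have hT0 : (0 : H →L[ℂ] H) ≤ T := CFC.sqrt_nonneg _
  have hTsa : IsSelfAdjoint T := IsSelfAdjoint.of_nonneg hT0
  have hTT : T * T = star W * W := CFC.sqrt_mul_sqrt_self _ ha
  -- W is not a unit, hence T is not a unit
  have hWU : ¬ IsUnit W := (spectrum.zero_mem_iff ℂ).mp hspec
  have hTU : ¬ IsUnit T := by
    intro h
    apply hWU
    have h2 : IsUnit (star W * W) := by rw [← hTT]; exact h.mul h
    rw [hW.star_eq] at h2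
    exact isUnit_mul_self_iff.mp h2
  have h0T : (0:ℝ) ∈ spectrum ℝ T := (spectrum.zero_mem_iff ℝ).mpr hTU
  have hnontriv : Nontrivial (H →L[ℂ] H) := by
    rcases subsingleton_or_nontrivial (H →L[ℂ] H) with h | h
    · exact absurd (isUnit_of_subsingleton W) hWU
    · exact h
  set ε : ℝ := c / (2 * B) with hε_def
  have hε : 0 < ε := by positivity
  set φ : ℝ → ℝ := fun t => max 0 (ε - t) with hφ_def
  have hφc : Continuous φ := continuous_const.max (by continuity)
  set P : H →L[ℂ] H := cfc φ T with hP_def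
  have hPsa : IsSelfAdjoint P := cfc_predicate φ T
  have hPne : P ≠ 0 := by
    intro h
    have hsp : spectrum ℝ P = φ '' spectrum ℝ T :=
      cfc_map_spectrum (f := φ) (a := T) hTsa hφc.continuousOn
    have hmem : ε ∈ spectrum ℝ P := by
      rw [hsp]; exact ⟨0, h0T, by simp [hφ_def, le_of_lt hε]⟩
    rw [h, spectrum.zero_eq] at hmem
    exact absurd hmem.symm (ne_of_lt hε)
  obtain ⟨x, hx⟩ : ∃ x : H, P x ≠ 0 := by
    by_contra h
    push_neg at h
    exact hPne (ContinuousLinearMap.ext fun y => by simp [h y])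
  set g : H := P x with hg_def
  -- selfadjoint operators move across the inner product
  have hinner : ∀ (Q : H →L[ℂ] H), IsSelfAdjoint Q → ∀ u v : H,
      ⟪u, Q v⟫_ℂ = ⟪Q u, v⟫_ℂ := by
    intro Q hQ u v
    conv_lhs => rw [← hQ.adjoint_eq]
    exact ContinuousLinearMap.adjoint_inner_right Q u v
  -- the square root of T
  set S : H →L[ℂ] H := CFC.sqrt T with hS_def
  have hS0 : (0 : H →L[ℂ] H) ≤ S := CFC.sqrt_nonneg _
  have hSsa : IsSelfAdjoint S := IsSelfAdjoint.of_nonneg hS0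
  have hSS : S * S = T := CFC.sqrt_mul_sqrt_self _ hT0
  have hTg : ⟪g, T g⟫_ℂ = ⟪S g, S g⟫_ℂ := by
    conv_lhs => rw [← hSS]
    rw [ContinuousLinearMap.mul_apply, hinner S hSsa]
  have hWg : ⟪g, T (T g)⟫_ℂ = ⟪W g, W g⟫_ℂ := by
    have h4 : T (T g) = (star W * W) g := by
      rw [← hTT]; rfl
    rw [h4, ContinuousLinearMap.mul_apply, ContinuousLinearMap.star_eq_adjoint,
      ContinuousLinearMap.adjoint_inner_right]
  have hSg : S g ≠ 0 := by
    intro h0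
    have hTg0 : T g = 0 := by
      rw [← hSS, ContinuousLinearMap.mul_apply, h0, map_zero]
    have hWg0 : W g = 0 := by
      have : ⟪W g, W g⟫_ℂ = 0 := by rw [← hWg, hTg0, map_zero, inner_zero_right]
      exact inner_self_eq_zero.mp this
    exact hx (hker g hWg0)
  have hTgre : (⟪g, T g⟫_ℂ).re = ‖S g‖ ^ 2 := by
    rw [hTg, ← RCLike.re_to_complex, inner_self_eq_norm_sq]
  have hWgre : (⟪g, T (T g)⟫_ℂ).re = ‖W g‖ ^ 2 := by
    rw [hWg, ← RCLike.re_to_complex, inner_self_eq_norm_sq]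
  have hpos : 0 < (⟪g, T g⟫_ℂ).re := by
    rw [hTgre]
    exact pow_pos (norm_pos_iff.mpr hSg) 2
  -- the key operator inequality
  have h1 : cfc (fun t : ℝ => φ t * (t * t) * φ t) T = P * (T * T) * P := by
    rw [cfc_mul (fun t => φ t * (t*t)) φ T (by fun_prop) hφc.continuousOn,
      cfc_mul φ (fun t => t*t) T hφc.continuousOn (by fun_prop),
      cfc_mul (fun t : ℝ => t) (fun t : ℝ => t) T (by fun_prop) (by fun_prop),
      cfc_id' ℝ T]
  have h2 : cfc (fun t : ℝ => ε * (φ t * t * φ t)) T = ε • (P * T * P) := by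
    rw [cfc_const_mul ε (fun t => φ t * t * φ t) T (by fun_prop),
      cfc_mul (fun t => φ t * t) φ T (by fun_prop) hφc.continuousOn,
      cfc_mul φ (fun t : ℝ => t) T hφc.continuousOn (by fun_prop),
      cfc_id' ℝ T]
  have key : P * (T * T) * P ≤ ε • (P * T * P) := by
    rw [← h1, ← h2]
    refine cfc_mono (fun t ht => ?_) ((hφc.mul (continuous_id.mul continuous_id)).mul hφc).continuousOn
      (continuous_const.mul ((hφc.mul continuous_id).mul hφc)).continuousOn
    have ht0 : 0 ≤ t := spectrum_nonneg_of_nonneg hT0 ht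
    rcases le_or_gt ε t with h | h
    · have hφ0 : φ t = 0 := max_eq_left (by linarith)
      simp [hφ0]
    · have hφt : φ t = ε - t := max_eq_right (by linarith)
      rw [hφt]
      nlinarith [mul_nonneg (mul_nonneg ht0 (sub_nonneg.mpr h.le)) (sq_nonneg (ε - t))]
  -- translate to inner products
  have e1 : ⟪x, (P * (T * T) * P) x⟫_ℂ = ⟪g, T (T g)⟫_ℂ := by
    simp only [ContinuousLinearMap.mul_apply]
    rw [hinner P hPsa x _, ← hg_def]
  have e2 : ⟪x, (P * T * P) x⟫_ℂ = ⟪g, T g⟫_ℂ := by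
    simp only [ContinuousLinearMap.mul_apply]
    rw [hinner P hPsa x _, ← hg_def]
  have hcmp : (⟪g, T (T g)⟫_ℂ).re ≤ ε * (⟪g, T g⟫_ℂ).re := by
    have hpos2 := ((ContinuousLinearMap.le_def _ _).mp key).inner_nonneg_right x
    rw [ContinuousLinearMap.sub_apply, ContinuousLinearMap.smul_apply,
      inner_sub_right, inner_smul_right_eq_smul] at hpos2
    replace hpos2 := (Complex.le_def.mp hpos2).1
    rw [Complex.zero_re, Complex.sub_re] at hpos2
    simp only [RCLike.re_to_complex, Complex.smul_re, smul_eq_mul] at hpos2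
    rw [e1, e2] at hpos2
    linarith
  refine ⟨g, ?_, hpos⟩
  have hup := (hf (W g)).2.2
  calc ∑' n, ‖⟪f n, W g⟫_ℂ‖ ^ 2 ≤ B * ‖W g‖ ^ 2 := hup
    _ = B * (⟪g, T (T g)⟫_ℂ).re := by rw [hWgre]
    _ ≤ B * (ε * (⟪g, T g⟫_ℂ).re) := by
        exact mul_le_mul_of_nonneg_left hcmp hB.le
    _ = (c / 2) * (⟪g, T g⟫_ℂ).re := by
        rw [hε_def]; field_simp
    _ < c * (⟪g, T g⟫_ℂ).re := by
        have : c / 2 < c := by linarith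
        exact mul_lt_mul_of_pos_right this hpos
end
end
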